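/- arXiv:2009.03939 — 4 statements merged into one kernel-verified Lean document; each statement's English description precedes it below -/
import Mathlib

section
/- Let τ, σ > 0, let N = ⌊στ/π⌋, and let 0 ≤ δ < 1. Then max over |v| ≤ (1+δ)τ of | sin(σv)/(πv) − (1/(2τ)) D_N(πv/τ) | is strictly less than (3 + ω(π(1+δ)/2)) / (2τ), where ω(t) = 1/t − cot(t) and D_N is the Dirichlet kernel; at v = 0 the quotient sin(σv)/(πv) is interpreted as its limiting value σ/π. -/
open MeasureTheory Real Filter

noncomputable section

/-- `F : ℂ → ℂ` has exponential type at most `σ`. -/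
def HasExpType (σ : ℝ) (F : ℂ → ℂ) : Prop :=
  ∀ ε > 0, ∃ M > 0, ∀ z : ℂ, ‖F z‖ ≤ M * Real.exp ((σ + ε) * ‖z‖)

/-- `f` belongs to the Bernstein space `B^p_σ`: `f ∈ L^p(ℝ)` and `f` extends to an
entire function of exponential type at most `σ`. -/
def MemBernstein (σ : ℝ) (p : ENNReal) (f : ℝ → ℂ) : Prop :=
  MemLp f p volume ∧
    ∃ F : ℂ → ℂ, Differentiable ℂ F ∧ HasExpType σ F ∧ ∀ x : ℝ, F x = f x

/-- `N = ⌊στ/π⌋`. -/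
def bernN (σ τ : ℝ) : ℤ := ⌊σ * τ / π⌋

/-- Fourier coefficient `c_{k,τ} = (1/(2τ)) ∫_{−τ}^{τ} f(t) e^{−iπkt/τ} dt`. -/
def fourierCoeffTau (f : ℝ → ℂ) (τ : ℝ) (k : ℤ) : ℂ :=
  (1 / (2 * τ)) * ∫ t in (-τ)..τ, f t * Complex.exp (-(Complex.I * π * k * t / τ))

/-- The trigonometric polynomial `f_τ(x) = ∑_{k=−N}^{N} c_{k,τ} e^{iπkx/τ}`. -/
def trigPoly (σ : ℝ) (f : ℝ → ℂ) (τ : ℝ) (x : ℝ) : ℂ :=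
  ∑ k ∈ Finset.Icc (-(bernN σ τ)) (bernN σ τ),
    fourierCoeffTau f τ k * Complex.exp (Complex.I * π * k * x / τ)

/-- The truncated trigonometric sum `φ_{f,τ} = f_τ · χ_{[−τ,τ]}`. -/
def truncTrig (σ : ℝ) (f : ℝ → ℂ) (τ : ℝ) : ℝ → ℂ :=
  Set.indicator (Set.Icc (-τ) τ) (trigPoly σ f τ)

/-- The Dirichlet kernel `D_N(ξ) = ∑_{k=−N}^{N} e^{ikξ}`. -/
def dirichlet (N : ℤ) (ξ : ℝ) : ℂ :=
  ∑ k ∈ Finset.Icc (-N) N, Complex.exp (Complex.I * k * ξ)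

/-- `sin(σv)/(πv)`, interpreted as `σ/π` at `v = 0`. -/
def sinKernel (σ : ℝ) (v : ℝ) : ℝ :=
  if v = 0 then σ / π else Real.sin (σ * v) / (π * v)

/-- `ω(t) = 1/t − cot t`. -/
def omegaFun (t : ℝ) : ℝ := 1 / t - Real.cot t

end


-- step ingredient: 2 sin u ≥ u (1 + cos u) on (0, π)
lemma aux_two_sin (u : ℝ) (h0 : 0 < u) (h1 : u < π) :
    u * (1 + Real.cos u) ≤ 2 * Real.sin u := by
  have hc : 0 < Real.cos (u / 2) := by
    apply Real.cos_pos_of_mem_Ioo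
    constructor <;> [linarith [Real.pi_pos]; linarith]
  have ht : u / 2 < Real.tan (u / 2) := Real.lt_tan (by linarith) (by linarith)
  rw [Real.tan_eq_sin_div_cos, lt_div_iff₀ hc] at ht
  have hcos : Real.cos u = 2 * Real.cos (u / 2) ^ 2 - 1 := by
    rw [← Real.cos_two_mul]; ring_nf
  have hsin : Real.sin u = 2 * Real.sin (u / 2) * Real.cos (u / 2) := by
    rw [← Real.sin_two_mul]; ring_nf
  nlinarith [sq_nonneg (Real.cos (u/2))]

lemma aux_omega_ge (u : ℝ) (h0 : 0 < u) (h1 : u < π) :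
    1 / Real.sin u - 1 / u ≤ omegaFun u := by
  have hs : 0 < Real.sin u := Real.sin_pos_of_pos_of_lt_pi h0 h1
  rw [omegaFun, Real.cot_eq_cos_div_sin]
  have h2 : (1 + Real.cos u) / Real.sin u ≤ 2 / u := by
    rw [div_le_div_iff₀ hs h0]; linarith [aux_two_sin u h0 h1]
  have h3 : (1 + Real.cos u) / Real.sin u = 1 / Real.sin u + Real.cos u / Real.sin u :=
    add_div _ _ _
  have h4 : (2:ℝ) / u = 1 / u + 1 / u := by ring
  linarith

lemma aux_omega_mono : StrictMonoOn omegaFun (Set.Ioo 0 π) := by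
  have hderiv : ∀ x ∈ Set.Ioo (0:ℝ) π, HasDerivAt omegaFun (1 / Real.sin x ^ 2 - 1 / x ^ 2) x := by
    intro x hx
    have hx0 : x ≠ 0 := ne_of_gt hx.1
    have hs : Real.sin x ≠ 0 := ne_of_gt (Real.sin_pos_of_pos_of_lt_pi hx.1 hx.2)
    have hfe : omegaFun = fun y => 1 / y - Real.cos y / Real.sin y := by
      funext y; rw [omegaFun, Real.cot_eq_cos_div_sin]
    rw [hfe]
    have h1 : HasDerivAt (fun y : ℝ => 1 / y) (-(1 / x ^ 2)) x := by
      simpa [one_div] using hasDerivAt_inv hx0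
    have h2 : HasDerivAt (fun y : ℝ => Real.cos y / Real.sin y)
        (-(1 / Real.sin x ^ 2)) x := by
      have := (Real.hasDerivAt_cos x).div (Real.hasDerivAt_sin x) hs
      refine this.congr_deriv ?_
      field_simp
      nlinarith [Real.sin_sq_add_cos_sq x]
    exact (h1.sub h2).congr_deriv (by ring)
  apply strictMonoOn_of_deriv_pos (convex_Ioo 0 π)
  · exact fun x hx => (hderiv x hx).continuousAt.continuousWithinAt
  · intro x hx
    rw [interior_Ioo] at hx
    rw [(hderiv x hx).deriv]
    have hs : 0 < Real.sin x := Real.sin_pos_of_pos_of_lt_pi hx.1 hx.2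
    have : Real.sin x < x := Real.sin_lt hx.1
    have h1 : Real.sin x ^ 2 < x ^ 2 := by nlinarith
    have : 1 / x ^ 2 < 1 / Real.sin x ^ 2 := by
      apply one_div_lt_one_div_of_lt <;> nlinarith
    linarith

lemma aux_core_pos (A B u t : ℝ) (hu : 0 < u) (hut : u ≤ t) (ht : t < π)
    (hAB : |A - B| ≤ 1) :
    |Real.sin (A * u) / u - Real.sin (B * u) / Real.sin u| ≤ 1 + omegaFun t := by
  have huπ : u < π := lt_of_le_of_lt hut ht
  have hs : 0 < Real.sin u := Real.sin_pos_of_pos_of_lt_pi hu huπ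
  have hsu : Real.sin u ≤ u := Real.sin_le hu.le
  -- first piece
  have h1 : |Real.sin (A * u) - Real.sin (B * u)| ≤ u := by
    rw [Real.sin_sub_sin]
    have e1 : |Real.sin ((A * u - B * u) / 2)| ≤ |A - B| * u / 2 := by
      calc |Real.sin ((A * u - B * u) / 2)| ≤ |(A * u - B * u) / 2| :=
            Real.abs_sin_le_abs
        _ = |A - B| * u / 2 := by
            rw [abs_div, abs_of_pos (by norm_num : (0:ℝ) < 2), ← sub_mul, abs_mul,
              abs_of_pos hu]
    have e2 : |Real.cos ((A * u + B * u) / 2)| ≤ 1 := Real.abs_cos_le_one _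
    calc |2 * Real.sin ((A * u - B * u) / 2) * Real.cos ((A * u + B * u) / 2)|
        = 2 * |Real.sin ((A * u - B * u) / 2)| * |Real.cos ((A * u + B * u) / 2)| := by
          rw [abs_mul, abs_mul, abs_of_pos (by norm_num : (0:ℝ) < 2)]
      _ ≤ 2 * (|A - B| * u / 2) * 1 := by
          apply mul_le_mul (by linarith) e2 (abs_nonneg _) (by positivity)
      _ = |A - B| * u := by ring
      _ ≤ 1 * u := by apply mul_le_mul_of_nonneg_right hAB hu.le
      _ = u := one_mul u
  -- decomposition
  have hdec : Real.sin (A * u) / u - Real.sin (B * u) / Real.sin u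
      = (Real.sin (A * u) - Real.sin (B * u)) / u
        + Real.sin (B * u) * (1 / u - 1 / Real.sin u) := by
    field_simp; ring
  rw [hdec]
  have h2 : |(Real.sin (A * u) - Real.sin (B * u)) / u| ≤ 1 := by
    rw [abs_div, abs_of_pos hu, div_le_one hu]; exact h1
  have h3 : |Real.sin (B * u) * (1 / u - 1 / Real.sin u)| ≤ omegaFun t := by
    have e1 : |1 / u - 1 / Real.sin u| = 1 / Real.sin u - 1 / u := by
      rw [abs_sub_comm, abs_of_nonneg]
      have : 1 / u ≤ 1 / Real.sin u := one_div_le_one_div_of_le hs hsu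
      linarith
    calc |Real.sin (B * u) * (1 / u - 1 / Real.sin u)|
        = |Real.sin (B * u)| * |1 / u - 1 / Real.sin u| := abs_mul _ _
      _ ≤ 1 * (1 / Real.sin u - 1 / u) := by
          rw [e1]
          apply mul_le_mul_of_nonneg_right (Real.abs_sin_le_one _)
          rw [← e1]; exact abs_nonneg _
      _ = 1 / Real.sin u - 1 / u := one_mul _
      _ ≤ omegaFun u := aux_omega_ge u hu huπ
      _ ≤ omegaFun t := by
          rcases eq_or_lt_of_le hut with h | h
          · rw [h]
          · exact le_of_lt (aux_omega_mono ⟨hu, huπ⟩ ⟨lt_of_lt_of_le hu hut, ht⟩ h)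
  calc |(Real.sin (A * u) - Real.sin (B * u)) / u
        + Real.sin (B * u) * (1 / u - 1 / Real.sin u)|
      ≤ |(Real.sin (A * u) - Real.sin (B * u)) / u|
        + |Real.sin (B * u) * (1 / u - 1 / Real.sin u)| := abs_add_le _ _
    _ ≤ 1 + omegaFun t := add_le_add h2 h3

lemma aux_core (A B u t : ℝ) (hu : u ≠ 0) (hut : |u| ≤ t) (ht : t < π)
    (hAB : |A - B| ≤ 1) :
    |Real.sin (A * u) / u - Real.sin (B * u) / Real.sin u| ≤ 1 + omegaFun t := by
  rcases hu.lt_or_gt with h | h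
  · have h0 : 0 < -u := by linarith
    have := aux_core_pos A B (-u) t h0 (by rwa [abs_of_neg h] at hut) ht hAB
    have e : Real.sin (A * -u) / (-u) - Real.sin (B * -u) / Real.sin (-u)
        = Real.sin (A * u) / u - Real.sin (B * u) / Real.sin u := by
      rw [mul_neg, mul_neg, Real.sin_neg, Real.sin_neg, Real.sin_neg]
      rw [neg_div_neg_eq, neg_div_neg_eq]
    rwa [e] at this
  · exact aux_core_pos A B u t h (by rwa [abs_of_pos h] at hut) ht hAB

lemma dirichlet_key (ξ : ℝ) (N : ℕ) :
    (Complex.exp (Complex.I * (1/2 : ℂ) * ξ) - Complex.exp (Complex.I * (-(1/2) : ℂ) * ξ))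
      * dirichlet N ξ
    = Complex.exp (Complex.I * ((N : ℂ) + 1/2) * ξ)
      - Complex.exp (Complex.I * (-((N : ℂ) + 1/2)) * ξ) := by
  induction N with
  | zero =>
    have h0 : dirichlet ((0:ℕ) : ℤ) ξ = 1 := by
      norm_num [dirichlet]
    rw [h0, mul_one]
    norm_num
  | succ n ih =>
    have hset : Finset.Icc (-((n:ℤ)+1)) ((n:ℤ)+1)
        = insert (-((n:ℤ)+1)) (insert ((n:ℤ)+1) (Finset.Icc (-(n:ℤ)) (n:ℤ))) := by
      ext k; simp only [Finset.mem_Icc, Finset.mem_insert]; omega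
    have hsum : dirichlet (n+1 : ℕ) ξ = dirichlet n ξ
        + Complex.exp (Complex.I * (-((n:ℂ)+1)) * ξ)
        + Complex.exp (Complex.I * ((n:ℂ)+1) * ξ) := by
      rw [dirichlet]
      push_cast
      rw [hset, Finset.sum_insert (by simp only [Finset.mem_insert, Finset.mem_Icc]; omega),
        Finset.sum_insert (by simp only [Finset.mem_Icc]; omega)]
      rw [dirichlet]
      push_cast
      ring
    rw [hsum, mul_add, mul_add, ih]
    simp only [sub_mul, ← Complex.exp_add]
    push_cast
    ring_nf

lemma exp_I_sub (θ : ℝ) :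
    Complex.exp ((θ : ℂ) * Complex.I) - Complex.exp ((-(θ : ℂ)) * Complex.I)
      = 2 * (Real.sin θ : ℂ) * Complex.I := by
  rw [Complex.exp_mul_I, Complex.exp_mul_I, Complex.cos_neg, Complex.sin_neg,
    ← Complex.ofReal_sin]
  ring

lemma aux_div (a b : ℂ) (hb : b ≠ 0) :
    2 * a * Complex.I / (2 * b * Complex.I) = a / b := by
  rw [mul_div_mul_right _ _ Complex.I_ne_zero]
  rw [mul_div_mul_left _ _ (by norm_num : (2:ℂ) ≠ 0)]

lemma dirichlet_closed (N : ℕ) (ξ : ℝ) (hs : Real.sin (ξ/2) ≠ 0) :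
    dirichlet (N : ℤ) ξ
      = ((Real.sin (((N:ℝ) + 1/2) * ξ) / Real.sin (ξ/2) : ℝ) : ℂ) := by
  have key := dirichlet_key ξ N
  have e1 : Complex.I * (1/2 : ℂ) * ξ = ((ξ/2 : ℝ) : ℂ) * Complex.I := by
    push_cast; ring
  have e2 : Complex.I * (-(1/2) : ℂ) * ξ = (-((ξ/2 : ℝ) : ℂ)) * Complex.I := by
    push_cast; ring
  have e3 : Complex.I * ((N:ℂ) + 1/2) * ξ = (((((N:ℝ) + 1/2) * ξ : ℝ)) : ℂ) * Complex.I := by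
    push_cast; ring
  have e4 : Complex.I * (-((N:ℂ) + 1/2)) * ξ
      = (-(((((N:ℝ) + 1/2) * ξ : ℝ)) : ℂ)) * Complex.I := by
    push_cast; ring
  rw [e1, e2, e3, e4, exp_I_sub, exp_I_sub] at key
  have hc : ((Real.sin (ξ/2) : ℝ) : ℂ) ≠ 0 := Complex.ofReal_ne_zero.mpr hs
  have ha : (2 * ((Real.sin (ξ/2) : ℝ) : ℂ) * Complex.I) ≠ 0 := by
    refine mul_ne_zero (mul_ne_zero (by norm_num) hc) Complex.I_ne_zero
  have hD : dirichlet (N : ℤ) ξ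
      = (2 * ((Real.sin (((N:ℝ) + 1/2) * ξ) : ℝ) : ℂ) * Complex.I)
        / (2 * ((Real.sin (ξ/2) : ℝ) : ℂ) * Complex.I) := by
    rw [eq_div_iff ha, mul_comm]; exact key
  rw [hD, Complex.ofReal_div, aux_div _ _ hc]


/-- **Lemma 2.** For `τ, σ > 0`, `N = ⌊στ/π⌋` and `0 ≤ δ < 1`, one has for all
`|v| ≤ (1+δ)τ` that `|sin(σv)/(πv) − (1/(2τ)) D_N(πv/τ)| < (3 + ω(π(1+δ)/2))/(2τ)`,
where `ω(t) = 1/t − cot t` and `sin(σv)/(πv)` is interpreted as `σ/π` at `v = 0`. -/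
theorem dirichlet_sinKernel_estimate (τ σ : ℝ) (hτ : 0 < τ) (hσ : 0 < σ)
    (δ : ℝ) (hδ0 : 0 ≤ δ) (hδ1 : δ < 1) (v : ℝ) (hv : |v| ≤ (1 + δ) * τ) :
    ‖(sinKernel σ v : ℂ) -
        (1 / (2 * τ) : ℂ) * dirichlet (bernN σ τ) (π * v / τ)‖ <
      (3 + omegaFun (π / 2 * (1 + δ))) / (2 * τ) := by
  have hπ := Real.pi_pos
  set t : ℝ := π / 2 * (1 + δ) with hts
  have ht0 : π / 2 ≤ t := by nlinarith
  have ht1 : t < π := by nlinarith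
  have htpos : 0 < t := by linarith
  have hN0 : 0 ≤ bernN σ τ := Int.floor_nonneg.mpr (by positivity)
  obtain ⟨N, hNN⟩ : ∃ N : ℕ, (N : ℤ) = bernN σ τ :=
    ⟨(bernN σ τ).toNat, Int.toNat_of_nonneg hN0⟩
  have h1 : (N : ℝ) ≤ σ * τ / π := by
    have := Int.floor_le (σ * τ / π)
    rw [show (⌊σ * τ / π⌋ : ℤ) = bernN σ τ from rfl, ← hNN] at this
    exact_mod_cast this
  have h2 : σ * τ / π < (N : ℝ) + 1 := by
    have := Int.lt_floor_add_one (σ * τ / π)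
    rw [show (⌊σ * τ / π⌋ : ℤ) = bernN σ τ from rfl, ← hNN] at this
    exact_mod_cast this
  have hω0 : 0 ≤ omegaFun t := by
    have hsint : 0 < Real.sin t := Real.sin_pos_of_pos_of_lt_pi htpos ht1
    have hcost : Real.cos t ≤ 0 :=
      Real.cos_nonpos_of_pi_div_two_le_of_le ht0 (by linarith)
    rw [omegaFun, Real.cot_eq_cos_div_sin]
    have hd : Real.cos t / Real.sin t ≤ 0 := div_nonpos_of_nonpos_of_nonneg hcost hsint.le
    have : 0 < 1 / t := by positivity
    linarith
  rw [← hNN]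
  by_cases hv0 : v = 0
  · subst hv0
    have hd0 : dirichlet (N : ℤ) (π * 0 / τ) = ((2 * N + 1 : ℕ) : ℂ) := by
      rw [dirichlet]
      simp only [mul_zero, zero_div, Complex.ofReal_zero, mul_zero, Complex.exp_zero]
      rw [Finset.sum_const, Int.card_Icc]
      have : ((N : ℤ) + 1 - -(N : ℤ)).toNat = 2 * N + 1 := by omega
      rw [this]; simp
    rw [hd0, sinKernel, if_pos rfl]
    have hc : ((σ / π : ℝ) : ℂ) - (1 / (2 * τ) : ℂ) * ((2 * N + 1 : ℕ) : ℂ)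
        = ((σ / π - (2 * (N : ℝ) + 1) / (2 * τ) : ℝ) : ℂ) := by
      push_cast; ring
    rw [hc, Complex.norm_real, Real.norm_eq_abs]
    have he : σ / π - (2 * (N : ℝ) + 1) / (2 * τ)
        = (2 * (σ * τ / π) - (2 * (N : ℝ) + 1)) / (2 * τ) := by
      field_simp
    rw [he, abs_div, abs_of_pos (by linarith : (0:ℝ) < 2 * τ)]
    have hnum : |2 * (σ * τ / π) - (2 * (N : ℝ) + 1)| ≤ 1 :=
      abs_le.mpr ⟨by linarith, by linarith⟩
    have : |2 * (σ * τ / π) - (2 * (N : ℝ) + 1)| < 3 + omegaFun t := by linarith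
    gcongr
  · set u : ℝ := π * v / (2 * τ) with hus
    have hu0 : u ≠ 0 := div_ne_zero (mul_ne_zero Real.pi_ne_zero hv0) (by positivity)
    have hξu : π * v / τ / 2 = u := by rw [hus]; field_simp
    have hut : |u| ≤ t := by
      rw [hus, abs_div, abs_mul, abs_of_pos hπ, abs_of_pos (by linarith : (0:ℝ) < 2 * τ)]
      rw [div_le_iff₀ (by linarith : (0:ℝ) < 2 * τ)]
      calc π * |v| ≤ π * ((1 + δ) * τ) := by
            apply mul_le_mul_of_nonneg_left hv hπ.le
        _ = t * (2 * τ) := by rw [hts]; ring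
    have huπ : |u| < π := lt_of_le_of_lt hut ht1
    have hsu : Real.sin u ≠ 0 := by
      rcases hu0.lt_or_gt with h | h
      · have : 0 < Real.sin (-u) := Real.sin_pos_of_pos_of_lt_pi (by linarith)
          (by rw [abs_of_neg h] at huπ; linarith)
        rw [Real.sin_neg] at this; linarith
      · exact ne_of_gt (Real.sin_pos_of_pos_of_lt_pi h
          (by rw [abs_of_pos h] at huπ; linarith))
    have hd := dirichlet_closed N (π * v / τ) (by rw [hξu]; exact hsu)
    rw [hd, sinKernel, if_neg hv0]
    set A : ℝ := 2 * (σ * τ / π) with hAs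
    set B : ℝ := 2 * (N : ℝ) + 1 with hBs
    have hAu : A * u = σ * v := by rw [hAs, hus]; field_simp
    have hpv : π * v = 2 * τ * u := by rw [hus]; field_simp
    have hBu : ((N : ℝ) + 1 / 2) * (π * v / τ) = B * u := by
      rw [hBs, hus]; field_simp
    have hr : Real.sin (σ * v) / (π * v)
        - 1 / (2 * τ) * (Real.sin (((N : ℝ) + 1 / 2) * (π * v / τ)) / Real.sin (π * v / τ / 2))
        = 1 / (2 * τ) * (Real.sin (A * u) / u - Real.sin (B * u) / Real.sin u) := by
      rw [← hAu, hBu, hξu, hpv]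
      field_simp
    have hc : ((Real.sin (σ * v) / (π * v) : ℝ) : ℂ)
        - (1 / (2 * τ) : ℂ)
          * ((Real.sin (((N : ℝ) + 1 / 2) * (π * v / τ)) / Real.sin (π * v / τ / 2) : ℝ) : ℂ)
        = ((1 / (2 * τ) * (Real.sin (A * u) / u - Real.sin (B * u) / Real.sin u) : ℝ) : ℂ) := by
      rw [← hr]
      push_cast
      ring
    rw [hc, Complex.norm_real, Real.norm_eq_abs]
    have hAB : |A - B| ≤ 1 := by
      rw [abs_le, hAs, hBs]
      constructor
      · linarith
      · linarith
    have hcore := aux_core A B u t hu0 hut ht1 hAB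
    rw [abs_mul, abs_of_pos (by positivity : (0:ℝ) < 1 / (2 * τ))]
    have hlt : |Real.sin (A * u) / u - Real.sin (B * u) / Real.sin u|
        < 3 + omegaFun t := by linarith
    calc 1 / (2 * τ) * |Real.sin (A * u) / u - Real.sin (B * u) / Real.sin u|
        = |Real.sin (A * u) / u - Real.sin (B * u) / Real.sin u| / (2 * τ) := by ring
      _ < (3 + omegaFun t) / (2 * τ) := by gcongr
end

section
/- Let σ > 0, 1 ≤ p < ∞, 0 < δ < 1, τ > 0 and N = ⌊στ/π⌋. Let f ∈ B^1_σ and define F₂(x) = ∫_{−δτ}^{δτ} f(t) [ sin σ(x−t)/(π(x−t)) − (1/(2τ)) D_N(π(x−t)/τ) ] dt. Then (∫_{−τ}^{τ} |F₂(x)|^p dx)^{1/p} ≤ (3 + ω(π(1+δ)/2)) / (2τ)^{1−1/p} · ∫_{−δτ}^{δτ} |f(t)| dt, where ω(t) = 1/t − cot(t). -/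
open MeasureTheory Real Filter

lemma abs_sin_le' (x : ℝ) : |Real.sin x| ≤ |x| := by
  rcases eq_or_ne x 0 with h | h
  · simp [h]
  · exact (Real.abs_sin_lt_abs h).le

lemma sin_sub_sin_le (a b : ℝ) : |Real.sin a - Real.sin b| ≤ |a - b| := by
  rw [Real.sin_sub_sin]
  calc |2 * Real.sin ((a-b)/2) * Real.cos ((a+b)/2)|
      = 2 * |Real.sin ((a-b)/2)| * |Real.cos ((a+b)/2)| := by
        rw [abs_mul, abs_mul]; norm_num
    _ ≤ 2 * |(a-b)/2| * 1 := by
        apply mul_le_mul (by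
          have := abs_sin_le' ((a-b)/2); nlinarith [abs_nonneg (Real.sin ((a-b)/2))])
          (Real.abs_cos_le_one _) (abs_nonneg _) (by positivity)
    _ = |a - b| := by rw [abs_div]; norm_num; ring
lemma mul_cos_le_sin' {s : ℝ} (h0 : 0 < s) (h1 : s < π/2) : s * Real.cos s ≤ Real.sin s := by
  have hc : 0 < Real.cos s := Real.cos_pos_of_mem_Ioo ⟨by linarith [Real.pi_pos], h1⟩
  have ht := Real.lt_tan h0 h1
  rw [Real.tan_eq_sin_div_cos, lt_div_iff₀ hc] at ht
  linarith

/-- `1/sin t − 1/t ≤ ω t` on `(0, π)`. -/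
lemma inv_sin_sub_inv_le_omega {t : ℝ} (h0 : 0 < t) (hπ : t < π) :
    1 / Real.sin t - 1 / t ≤ omegaFun t := by
  have hs : 0 < Real.sin t := Real.sin_pos_of_pos_of_lt_pi h0 hπ
  have hc2 : 0 < Real.cos (t/2) :=
    Real.cos_pos_of_mem_Ioo ⟨by linarith [Real.pi_pos], by linarith⟩
  have hs2 : 0 < Real.sin (t/2) := Real.sin_pos_of_pos_of_lt_pi (by linarith)
    (by linarith [Real.pi_pos])
  have key : t * (1 + Real.cos t) ≤ 2 * Real.sin t := by
    have h1 : 1 + Real.cos t = 2 * Real.cos (t/2)^2 := by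
      have := Real.cos_sq (t/2)
      rw [show 2*(t/2) = t by ring] at this; linarith
    have h2 : Real.sin t = 2 * Real.sin (t/2) * Real.cos (t/2) := by
      rw [show t = 2*(t/2) by ring, Real.sin_two_mul]; ring_nf
    have h3 : (t/2) * Real.cos (t/2) ≤ Real.sin (t/2) :=
      mul_cos_le_sin' (by linarith) (by linarith)
    nlinarith
  rw [omegaFun, Real.cot_eq_cos_div_sin, div_sub_div _ _ (ne_of_gt hs) (ne_of_gt h0),
    div_sub_div _ _ (ne_of_gt h0) (ne_of_gt hs), div_le_div_iff₀ (by positivity) (by positivity)]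
  nlinarith [mul_nonneg (mul_pos h0 hs).le (sub_nonneg.mpr key)]

/-- `ω` is monotone on `(0, π)`. -/
lemma omega_mono {a b : ℝ} (ha : 0 < a) (hab : a ≤ b) (hb : b < π) :
    omegaFun a ≤ omegaFun b := by
  have hder : ∀ x ∈ Set.Ioo (0:ℝ) π,
      HasDerivAt omegaFun (-(1/x^2) - -(1/(Real.sin x)^2)) x := by
    intro x hx
    have hx0 : x ≠ 0 := ne_of_gt hx.1
    have hs : 0 < Real.sin x := Real.sin_pos_of_pos_of_lt_pi hx.1 hx.2
    have h1 : HasDerivAt (fun t : ℝ => 1/t) (-(1/x^2)) x := by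
      simpa [one_div] using (hasDerivAt_inv hx0)
    have h2 : HasDerivAt Real.cot (-(1/(Real.sin x)^2)) x := by
      have hd := (Real.hasDerivAt_cos x).div (Real.hasDerivAt_sin x) (ne_of_gt hs)
      have heq : (Real.cos / Real.sin) = Real.cot :=
        funext fun y => (Real.cot_eq_cos_div_sin y).symm
      rw [heq] at hd
      refine hd.congr_deriv ?_
      have hpy := Real.sin_sq_add_cos_sq x
      have hnum : (-Real.sin x * Real.sin x - Real.cos x * Real.cos x) = -1 := by nlinarith
      rw [hnum]; ring
    exact h1.sub h2
  have hmono : StrictMonoOn omegaFun (Set.Ioo 0 π) := by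
    apply strictMonoOn_of_deriv_pos (convex_Ioo 0 π)
    · exact fun x hx => ((hder x hx).continuousAt).continuousWithinAt
    · intro x hx
      rw [interior_Ioo] at hx
      rw [(hder x hx).deriv]
      have hs : 0 < Real.sin x := Real.sin_pos_of_pos_of_lt_pi hx.1 hx.2
      have hlt : Real.sin x < x := Real.sin_lt hx.1
      have h2 : Real.sin x ^ 2 < x ^ 2 := by nlinarith
      have : 1/x^2 < 1/(Real.sin x)^2 :=
        div_lt_div_of_pos_left one_pos (by positivity) h2
      linarith
  rcases eq_or_lt_of_le hab with rfl | h
  · exact le_refl _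
  · exact (hmono ⟨ha, lt_trans h hb⟩ ⟨lt_of_lt_of_le ha hab, hb⟩ h).le

lemma Icc_int_succ (n : ℕ) :
    Finset.Icc (-((n:ℤ)+1)) ((n:ℤ)+1)
      = insert (-((n:ℤ)+1)) (insert ((n:ℤ)+1) (Finset.Icc (-(n:ℤ)) (n:ℤ))) := by
  ext k; simp only [Finset.mem_Icc, Finset.mem_insert]; omega

lemma dir_telescope (ξ : ℝ) (n : ℕ) :
    (Complex.exp (Complex.I * ξ) - 1) * dirichlet (n : ℤ) ξ
      = Complex.exp (Complex.I * (n+1) * ξ) - Complex.exp (-(Complex.I * n * ξ)) := by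
  induction n with
  | zero => simp [dirichlet, Complex.exp_neg]
  | succ n ih =>
    have hcast : ((n+1:ℕ):ℤ) = (n:ℤ)+1 := by push_cast; ring
    rw [dirichlet, hcast, Icc_int_succ, Finset.sum_insert (by
        simp only [Finset.mem_insert, Finset.mem_Icc]; omega),
      Finset.sum_insert (by simp only [Finset.mem_Icc]; omega)]
    have e1 : Complex.exp (Complex.I*ξ) * Complex.exp (Complex.I * (-((n:ℂ)+1)) * ξ)
        = Complex.exp (-(Complex.I * n * ξ)) := by rw [← Complex.exp_add]; ring_nf
    have e2 : Complex.exp (Complex.I*ξ) * Complex.exp (Complex.I * ((n:ℂ)+1) * ξ)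
        = Complex.exp (Complex.I * ((n:ℂ)+1+1) * ξ) := by rw [← Complex.exp_add]; ring_nf
    have e3 : Complex.exp (Complex.I * (-((n:ℂ)+1)) * ξ)
        = Complex.exp (-(Complex.I * ((n:ℂ)+1) * ξ)) := by ring_nf
    rw [show (∑ k ∈ Finset.Icc (-(n:ℤ)) (n:ℤ), Complex.exp (Complex.I * k * ξ)) = dirichlet n ξ from rfl]
    push_cast
    linear_combination e1 + e2 + ih - e3

lemma exp_sub_exp (θ : ℝ) :
    Complex.exp (Complex.I * θ) - Complex.exp (-(Complex.I * θ))
      = 2 * Complex.I * (Real.sin θ : ℂ) := by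
  rw [show Complex.I * (θ:ℂ) = (θ:ℂ) * Complex.I by ring,
    show -((θ:ℂ) * Complex.I) = ((-θ : ℝ) : ℂ) * Complex.I by push_cast; ring,
    Complex.exp_mul_I, Complex.exp_mul_I]
  push_cast
  simp [Complex.sin_neg, Complex.cos_neg, ← Complex.ofReal_sin]
  ring

lemma dir_closed (ξ : ℝ) (n : ℕ) (h : Real.sin (ξ/2) ≠ 0) :
    dirichlet (n:ℤ) ξ = ((Real.sin ((2*n+1)*(ξ/2)) / Real.sin (ξ/2) : ℝ) : ℂ) := by
  have key := dir_telescope ξ n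
  have a1 : Complex.exp (-(Complex.I * ((ξ:ℂ)/2))) * Complex.exp (Complex.I * ξ)
      = Complex.exp (Complex.I * ((ξ:ℂ)/2)) := by rw [← Complex.exp_add]; ring_nf
  have a2 : Complex.exp (-(Complex.I * ((ξ:ℂ)/2))) * Complex.exp (Complex.I * ((n:ℂ)+1) * ξ)
      = Complex.exp (Complex.I * ((2*(n:ℂ)+1)*((ξ:ℂ)/2))) := by rw [← Complex.exp_add]; ring_nf
  have a3 : Complex.exp (-(Complex.I * ((ξ:ℂ)/2))) * Complex.exp (-(Complex.I * (n:ℂ) * ξ))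
      = Complex.exp (-(Complex.I * ((2*(n:ℂ)+1)*((ξ:ℂ)/2)))) := by rw [← Complex.exp_add]; ring_nf
  have h2 : (Complex.exp (Complex.I * ((ξ:ℂ)/2)) - Complex.exp (-(Complex.I * ((ξ:ℂ)/2))))
        * dirichlet (n:ℤ) ξ
      = Complex.exp (Complex.I * ((2*(n:ℂ)+1)*((ξ:ℂ)/2)))
        - Complex.exp (-(Complex.I * ((2*(n:ℂ)+1)*((ξ:ℂ)/2)))) := by
    linear_combination Complex.exp (-(Complex.I * ((ξ:ℂ)/2))) * key
      - dirichlet (n:ℤ) ξ * a1 + a2 - a3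
  have c1 : ((ξ:ℂ)/2) = (((ξ/2 : ℝ)) : ℂ) := by push_cast; ring
  rw [c1] at h2
  have c2 : ((2*(n:ℂ)+1) * (((ξ/2:ℝ)):ℂ)) = ((((2*n+1)*(ξ/2) : ℝ)) : ℂ) := by push_cast; ring
  rw [c2, exp_sub_exp, exp_sub_exp] at h2
  have hI : (2 : ℂ) * Complex.I ≠ 0 := by simp [Complex.I_ne_zero]
  have hsc : ((Real.sin (ξ/2) : ℝ) : ℂ) ≠ 0 := Complex.ofReal_ne_zero.mpr h
  rw [Complex.ofReal_div, eq_div_iff hsc]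
  have hkey := mul_left_cancel₀ hI (show (2*Complex.I) * ((Real.sin (ξ/2) : ℂ) * dirichlet (n:ℤ) ξ) = (2*Complex.I) * ((Real.sin ((2*n+1)*(ξ/2)) : ℝ) : ℂ) by linear_combination h2)
  linear_combination hkey

lemma dirichlet_zero (n : ℕ) : dirichlet (n:ℤ) 0 = (2*(n:ℝ)+1 : ℝ) := by
  have : ∀ k ∈ Finset.Icc (-(n:ℤ)) (n:ℤ), Complex.exp (Complex.I * k * (0:ℝ)) = 1 := by
    intro k _; simp
  rw [dirichlet, Finset.sum_congr rfl this, Finset.sum_const, Int.card_Icc]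
  have hN : ((n:ℤ)+1 - -(n:ℤ)).toNat = 2*n+1 := by omega
  rw [hN]
  simp only [nsmul_eq_mul, mul_one]
  push_cast
  norm_num

lemma norm_dirichlet_le (n : ℕ) (ξ : ℝ) : ‖dirichlet (n:ℤ) ξ‖ ≤ 2*(n:ℝ)+1 := by
  rw [dirichlet]
  refine (norm_sum_le _ _).trans ?_
  have : ∀ k ∈ Finset.Icc (-(n:ℤ)) (n:ℤ), ‖Complex.exp (Complex.I * k * ξ)‖ = 1 := by
    intro k _
    rw [show Complex.I * k * ξ = ((k*ξ : ℝ):ℂ) * Complex.I by push_cast; ring]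
    exact Complex.norm_exp_ofReal_mul_I _
  rw [Finset.sum_congr rfl this, Finset.sum_const, Int.card_Icc]
  have hN : ((n:ℤ)+1 - -(n:ℤ)).toNat = 2*n+1 := by omega
  rw [hN]
  simp only [nsmul_eq_mul, mul_one]
  push_cast; norm_num

lemma omega_pos {δ : ℝ} (hδ0 : 0 < δ) (hδ1 : δ < 1) : 0 < omegaFun (π/2*(1+δ)) := by
  have hπ := Real.pi_pos
  have hu1 : π/2 < π/2*(1+δ) := by nlinarith
  have hu2 : π/2*(1+δ) < π := by nlinarith
  have hs : 0 < Real.sin (π/2*(1+δ)) := Real.sin_pos_of_pos_of_lt_pi (by linarith) hu2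
  have hc : Real.cos (π/2*(1+δ)) < 0 :=
    Real.cos_neg_of_pi_div_two_lt_of_lt hu1 (by linarith)
  rw [omegaFun, Real.cot_eq_cos_div_sin]
  have h1 : Real.cos (π/2*(1+δ)) / Real.sin (π/2*(1+δ)) < 0 := div_neg_of_neg_of_pos hc hs
  have h2 : 0 < 1/(π/2*(1+δ)) := by positivity
  linarith

lemma kernel_bound (σ τ δ : ℝ) (hσ : 0 < σ) (hτ : 0 < τ) (hδ0 : 0 < δ) (hδ1 : δ < 1)
    (v : ℝ) (hv : |v| ≤ (1+δ)*τ) :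
    ‖(sinKernel σ v : ℂ) - (1/(2*τ):ℂ) * dirichlet (bernN σ τ) (π*(v)/τ)‖
      ≤ (3 + omegaFun (π/2*(1+δ))) / (2*τ) := by
  have hπ := Real.pi_pos
  have h2τ : (0:ℝ) < 2*τ := by linarith
  have hu2 : π/2*(1+δ) < π := by nlinarith
  have hω : 0 < omegaFun (π/2*(1+δ)) := omega_pos hδ0 hδ1
  have hN0 : 0 ≤ bernN σ τ := Int.floor_nonneg.mpr (by positivity)
  set n := (bernN σ τ).toNat with hn
  have hnN : (n:ℤ) = bernN σ τ := Int.toNat_of_nonneg hN0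
  have hfl : ((n:ℝ)) ≤ σ*τ/π := by
    have h : ((bernN σ τ : ℤ):ℝ) ≤ σ*τ/π := Int.floor_le (σ*τ/π)
    rw [← hnN] at h; exact_mod_cast h
  have hfu : σ*τ/π < (n:ℝ)+1 := by
    have h : σ*τ/π < ((bernN σ τ : ℤ):ℝ) + 1 := Int.lt_floor_add_one (σ*τ/π)
    rw [← hnN] at h; exact_mod_cast h
  have k1 : (n:ℝ)*π ≤ σ*τ := by rw [le_div_iff₀ hπ] at hfl; linarith
  have k2 : σ*τ < ((n:ℝ)+1)*π := by rw [div_lt_iff₀ hπ] at hfu; linarith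
  rw [← hnN]
  rcases eq_or_ne v 0 with rfl | hv0
  · rw [show sinKernel σ 0 = σ/π from if_pos rfl]
    rw [show π*(0:ℝ)/τ = 0 by simp, dirichlet_zero]
    rw [show (↑(σ/π) : ℂ) - (1/(2*τ):ℂ) * ((2*(n:ℝ)+1 : ℝ):ℂ)
        = ((σ/π - 1/(2*τ)*(2*(n:ℝ)+1) : ℝ) : ℂ) by push_cast; ring]
    rw [Complex.norm_real, Real.norm_eq_abs]
    rw [show σ/π - 1/(2*τ)*(2*(n:ℝ)+1) = (2*(σ*τ/π) - (2*(n:ℝ)+1))/(2*τ) by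
      field_simp]
    rw [abs_div, abs_of_pos h2τ]
    gcongr
    have : |2*(σ*τ/π) - (2*(n:ℝ)+1)| ≤ 1 := abs_le.mpr ⟨by linarith, by linarith⟩
    linarith
  · -- main case
    set u := π*v/(2*τ) with hu
    have huv : π*v = 2*τ*u := by rw [hu]; field_simp
    have hu0 : u ≠ 0 := by
      rw [hu]; exact div_ne_zero (mul_ne_zero (ne_of_gt hπ) hv0) (ne_of_gt h2τ)
    have huab : |u| ≤ π/2*(1+δ) := by
      rw [hu, abs_div, abs_mul, abs_of_pos hπ, abs_of_pos h2τ, div_le_iff₀ h2τ]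
      calc π * |v| ≤ π * ((1+δ)*τ) := by gcongr
        _ = π/2*(1+δ) * (2*τ) := by ring
    have huπ : |u| < π := lt_of_le_of_lt huab hu2
    have hu_pos : 0 < |u| := abs_pos.mpr hu0
    have hsin_absu : 0 < Real.sin |u| := Real.sin_pos_of_pos_of_lt_pi hu_pos huπ
    have hsinu : Real.sin u ≠ 0 := by
      rcases lt_or_gt_of_ne hu0 with h | h
      · rw [abs_of_neg h, Real.sin_neg] at hsin_absu
        intro hc; rw [hc] at hsin_absu; simp at hsin_absu
      · rw [abs_of_pos h] at hsin_absu; exact ne_of_gt hsin_absu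
    have hξ2 : (π*v/τ)/2 = u := by rw [hu]; ring
    have hsinξ : Real.sin ((π*v/τ)/2) ≠ 0 := by rw [hξ2]; exact hsinu
    rw [dir_closed _ _ hsinξ, hξ2]
    rw [show sinKernel σ v = Real.sin (σ*v)/(π*v) from if_neg hv0]
    rw [show (↑(Real.sin (σ*v)/(π*v)) : ℂ)
          - (1/(2*τ):ℂ) * ((Real.sin ((2*(n:ℝ)+1)*u) / Real.sin u : ℝ) : ℂ)
        = ((Real.sin (σ*v)/(π*v) - 1/(2*τ) * (Real.sin ((2*(n:ℝ)+1)*u) / Real.sin u) : ℝ) : ℂ)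
        by push_cast; ring]
    rw [Complex.norm_real, Real.norm_eq_abs]
    set S := Real.sin ((2*(n:ℝ)+1)*u) with hS
    have hπv : π*v ≠ 0 := mul_ne_zero (ne_of_gt hπ) hv0
    have hw : π/(2*τ)*(2*τ) = π := by field_simp
    have hA : |Real.sin (σ*v)/(π*v) - S/(π*v)| ≤ 1/(2*τ) := by
      rw [div_sub_div_same, abs_div]
      have harg : |σ*v - (2*(n:ℝ)+1)*u| ≤ π/(2*τ) * |v| := by
        rw [show σ*v - (2*(n:ℝ)+1)*u = (σ - (2*(n:ℝ)+1)*(π/(2*τ))) * v by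
          rw [hu]; field_simp]
        rw [abs_mul]
        gcongr
        apply abs_le.mpr
        constructor
        · nlinarith
        · nlinarith
      calc |Real.sin (σ*v) - S| / |π*v| ≤ (π/(2*τ) * |v|) / |π*v| := by
            gcongr
            exact (sin_sub_sin_le _ _).trans harg
        _ = 1/(2*τ) := by
            have e1 : (π:ℝ) ≠ 0 := ne_of_gt hπ
            have e2 : |v| ≠ 0 := ne_of_gt (abs_pos.mpr hv0)
            have e3 : τ ≠ 0 := ne_of_gt hτ
            rw [abs_mul, abs_of_pos hπ]
            field_simp
    have hB : |S/(π*v) - 1/(2*τ) * (S/Real.sin u)| ≤ omegaFun (π/2*(1+δ)) / (2*τ) := by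
      have hSabs : |S| ≤ 1 := abs_le.mpr ⟨Real.neg_one_le_sin _, Real.sin_le_one _⟩
      have hsplit : S/(π*v) - 1/(2*τ) * (S/Real.sin u)
          = S/(2*τ) * (1/u - 1/Real.sin u) := by
        rw [huv]
        field_simp
      rw [hsplit, abs_mul, abs_div, abs_of_pos h2τ]
      have hg : |1/u - 1/Real.sin u| ≤ omegaFun (π/2*(1+δ)) := by
        have heq : |1/u - 1/Real.sin u| = 1/Real.sin |u| - 1/|u| := by
          rcases lt_or_gt_of_ne hu0 with h | h
          · have h2 : 0 < Real.sin (-u) := by rwa [abs_of_neg h] at hsin_absu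
            have h2' : Real.sin u < 0 := by rw [Real.sin_neg] at h2; linarith
            have h1 : Real.sin (-u) < -u := Real.sin_lt (by linarith)
            have h1' : u < Real.sin u := by rw [Real.sin_neg] at h1; linarith
            have hle : 1/Real.sin u ≤ 1/u :=
              one_div_le_one_div_of_neg_of_le h2' h1'.le
            rw [abs_of_nonneg (by linarith), abs_of_neg h, Real.sin_neg]
            rw [div_neg, div_neg]
            ring
          · have h2 : 0 < Real.sin u := by rwa [abs_of_pos h] at hsin_absu
            have h1 : Real.sin u < u := Real.sin_lt h
            have hle : 1/u ≤ 1/Real.sin u := one_div_le_one_div_of_le h2 h1.le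
            rw [abs_of_pos h, abs_of_nonpos (by linarith)]
            ring
        rw [heq]
        exact (inv_sin_sub_inv_le_omega hu_pos huπ).trans
          (omega_mono hu_pos huab hu2)
      calc |S|/(2*τ) * |1/u - 1/Real.sin u| ≤ 1/(2*τ) * omegaFun (π/2*(1+δ)) := by
            apply mul_le_mul (by gcongr) hg (abs_nonneg _) (by positivity)
        _ = omegaFun (π/2*(1+δ)) / (2*τ) := by ring
    calc |Real.sin (σ*v)/(π*v) - 1/(2*τ) * (S / Real.sin u)|
        ≤ |Real.sin (σ*v)/(π*v) - S/(π*v)| + |S/(π*v) - 1/(2*τ) * (S/Real.sin u)| := by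
          apply abs_sub_le
      _ ≤ 1/(2*τ) + omegaFun (π/2*(1+δ)) / (2*τ) := add_le_add hA hB
      _ ≤ (3 + omegaFun (π/2*(1+δ))) / (2*τ) := by
          rw [← add_div]
          gcongr
          norm_num

lemma measurable_sinKernel (σ : ℝ) : Measurable (sinKernel σ) := by
  have h : MeasurableSet {v : ℝ | v = 0} := by
    convert measurableSet_singleton (0:ℝ) using 1
    ext v; simp
  exact Measurable.ite h measurable_const
    ((Real.measurable_sin.comp (measurable_id.const_mul σ)).div (measurable_id.const_mul π))

lemma continuous_dirichlet (N : ℤ) : Continuous (dirichlet N) := by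
  unfold dirichlet
  apply continuous_finset_sum
  intro k _
  exact Complex.continuous_exp.comp ((continuous_const.mul Complex.continuous_ofReal))

lemma norm_sinKernel_le (σ : ℝ) (hσ : 0 < σ) (v : ℝ) : |sinKernel σ v| ≤ σ/π := by
  have hπ := Real.pi_pos
  rcases eq_or_ne v 0 with rfl | hv
  · rw [show sinKernel σ 0 = σ/π from if_pos rfl, abs_of_pos (by positivity)]
  · rw [show sinKernel σ v = Real.sin (σ*v)/(π*v) from if_neg hv, abs_div]
    calc |Real.sin (σ*v)|/|π*v| ≤ |σ*v|/|π*v| :=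
          (div_le_div_iff_of_pos_right (abs_pos.mpr (mul_ne_zero (ne_of_gt hπ) hv))).mpr
            (abs_sin_le' _)
      _ = σ/π := by
          rw [abs_mul, abs_mul, abs_of_pos hσ, abs_of_pos hπ]
          rw [div_eq_div_iff (by positivity) (ne_of_gt hπ)]
          ring


/-- Estimate (2.11): for `f ∈ B^1_σ` and
`F₂(x) = ∫_{−δτ}^{δτ} f(t) [sin σ(x−t)/(π(x−t)) − (1/(2τ)) D_N(π(x−t)/τ)] dt`, one has
`(∫_{−τ}^{τ} |F₂|^p)^{1/p} ≤ (3 + ω(π(1+δ)/2))/(2τ)^{1−1/p} · ∫_{−δτ}^{δτ} |f|`. -/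
theorem F2_estimate (σ : ℝ) (hσ : 0 < σ) (p : ℝ) (hp : 1 ≤ p)
    (δ τ : ℝ) (hδ0 : 0 < δ) (hδ1 : δ < 1) (hτ : 0 < τ)
    (f : ℝ → ℂ) (hf : MemBernstein σ 1 f) :
    (∫ x in (-τ)..τ,
        ‖∫ t in (-(δ * τ))..(δ * τ),
            f t * ((sinKernel σ (x - t) : ℂ) -
              (1 / (2 * τ) : ℂ) * dirichlet (bernN σ τ) (π * (x - t) / τ))‖ ^ p)
        ^ (1 / p) ≤
      (3 + omegaFun (π / 2 * (1 + δ))) / (2 * τ) ^ (1 - 1 / p) *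
        ∫ t in (-(δ * τ))..(δ * τ), ‖f t‖ := by
  have hπ := Real.pi_pos
  have h2τ : (0:ℝ) < 2*τ := by linarith
  have hδτ : -(δ*τ) ≤ δ*τ := by nlinarith
  have hττ : -τ ≤ τ := by linarith
  have hp0 : 0 < p := lt_of_lt_of_le one_pos hp
  have hω : 0 < omegaFun (π/2*(1+δ)) := omega_pos hδ0 hδ1
  set C := (3 + omegaFun (π/2*(1+δ))) / (2*τ) with hC
  have hC0 : 0 < C := div_pos (by linarith) h2τ
  set I := ∫ t in (-(δ*τ))..(δ*τ), ‖f t‖ with hI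
  have hI0 : 0 ≤ I := intervalIntegral.integral_nonneg hδτ (fun t _ => norm_nonneg _)
  have hfi : Integrable f volume := memLp_one_iff_integrable.mp hf.1
  -- the kernel function
  set K : ℝ → ℂ := fun v => ((sinKernel σ v : ℂ)
    - (1/(2*τ):ℂ) * dirichlet (bernN σ τ) (π*v/τ)) with hKdef
  have hKmeas : Measurable K := by
    apply Measurable.sub
    · exact Complex.measurable_ofReal.comp (measurable_sinKernel σ)
    · exact measurable_const.mul
        ((continuous_dirichlet _).measurable.comp ((measurable_id.const_mul π).div_const τ))
  -- global bound for K (for integrability)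
  obtain ⟨n, hn⟩ : ∃ n : ℕ, (n:ℤ) = bernN σ τ :=
    ⟨(bernN σ τ).toNat, Int.toNat_of_nonneg (Int.floor_nonneg.mpr (by positivity))⟩
  have hKbdd : ∀ v, ‖K v‖ ≤ σ/π + 1/(2*τ)*(2*(n:ℝ)+1) := by
    intro v
    rw [hKdef]
    refine (norm_sub_le _ _).trans ?_
    apply add_le_add
    · rw [Complex.norm_real, Real.norm_eq_abs]; exact norm_sinKernel_le σ hσ v
    · rw [norm_mul, ← hn]
      calc ‖(1/(2*τ):ℂ)‖ * ‖dirichlet ((n:ℤ)) (π*v/τ)‖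
          ≤ ‖(1/(2*τ):ℂ)‖ * (2*(n:ℝ)+1) := by
            gcongr; exact norm_dirichlet_le n _
        _ = 1/(2*τ)*(2*(n:ℝ)+1) := by
            rw [show (1/(2*τ):ℂ) = ((1/(2*τ):ℝ):ℂ) by push_cast; ring,
              Complex.norm_real, Real.norm_eq_abs, abs_of_pos (by positivity)]
  show (∫ x in (-τ)..τ, ‖∫ t in (-(δ*τ))..(δ*τ), f t * K (x - t)‖ ^ p) ^ (1/p)
      ≤ (3 + omegaFun (π/2*(1+δ))) / (2*τ)^((1:ℝ)-1/p) * I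
  -- pointwise bound on the inner integral
  have pointwise : ∀ x ∈ Set.Icc (-τ) τ,
      ‖∫ t in (-(δ*τ))..(δ*τ), f t * K (x - t)‖ ≤ C * I := by
    intro x hx
    have hxabs : |x| ≤ τ := abs_le.mpr ⟨(Set.mem_Icc.mp hx).1, (Set.mem_Icc.mp hx).2⟩
    have hgint : Integrable (fun t => f t * K (x - t)) volume := by
      have hm : AEStronglyMeasurable (fun t => K (x - t)) volume :=
        (hKmeas.comp (measurable_const.sub measurable_id)).aestronglyMeasurable
      have := Integrable.bdd_mul (c := σ/π + 1/(2*τ)*(2*(n:ℝ)+1)) hfi hm (Filter.Eventually.of_forall fun t => hKbdd _)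
      simpa [mul_comm] using this
    calc ‖∫ t in (-(δ*τ))..(δ*τ), f t * K (x - t)‖
        ≤ ∫ t in (-(δ*τ))..(δ*τ), ‖f t * K (x - t)‖ :=
          intervalIntegral.norm_integral_le_integral_norm hδτ
      _ ≤ ∫ t in (-(δ*τ))..(δ*τ), C * ‖f t‖ := by
          apply intervalIntegral.integral_mono_on hδτ
            hgint.norm.intervalIntegrable
            (hfi.norm.const_mul C).intervalIntegrable
          intro t ht
          rw [norm_mul]
          rw [mul_comm C _]
          apply mul_le_mul_of_nonneg_left _ (norm_nonneg _)
          have htabs : |t| ≤ δ*τ :=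
            abs_le.mpr ⟨(Set.mem_Icc.mp ht).1, (Set.mem_Icc.mp ht).2⟩
          have hvabs : |x - t| ≤ (1+δ)*τ := by
            calc |x - t| ≤ |x| + |t| := by
                  rw [sub_eq_add_neg]
                  exact (abs_add_le _ _).trans (by rw [abs_neg])
              _ ≤ τ + δ*τ := add_le_add hxabs htabs
              _ = (1+δ)*τ := by ring
          exact kernel_bound σ τ δ hσ hτ hδ0 hδ1 (x - t) hvabs
      _ = C * I := by rw [hI, intervalIntegral.integral_const_mul]
  -- bound the outer integral
  have bound1 : (∫ x in (-τ)..τ,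
      ‖∫ t in (-(δ*τ))..(δ*τ), f t * K (x - t)‖ ^ p) ≤ 2*τ * (C*I)^p := by
    by_cases hInt : IntervalIntegrable
        (fun x => ‖∫ t in (-(δ*τ))..(δ*τ), f t * K (x - t)‖ ^ p) volume (-τ) τ
    · calc (∫ x in (-τ)..τ, ‖∫ t in (-(δ*τ))..(δ*τ), f t * K (x - t)‖ ^ p)
          ≤ ∫ _x in (-τ)..τ, (C*I)^p := by
            apply intervalIntegral.integral_mono_on hττ hInt intervalIntegrable_const
            intro x hx
            exact Real.rpow_le_rpow (norm_nonneg _) (pointwise x hx) (le_of_lt hp0)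
        _ = 2*τ * (C*I)^p := by
            rw [intervalIntegral.integral_const, smul_eq_mul]
            ring_nf
    · rw [intervalIntegral.integral_undef hInt]
      positivity
  have hCI : 0 ≤ C * I := mul_nonneg hC0.le hI0
  have lhs_le : (∫ x in (-τ)..τ,
      ‖∫ t in (-(δ*τ))..(δ*τ), f t * K (x - t)‖ ^ p) ^ (1/p)
      ≤ (2*τ * (C*I)^p) ^ (1/p) := by
    apply Real.rpow_le_rpow _ bound1 (by positivity)
    exact intervalIntegral.integral_nonneg hττ
      (fun x _ => Real.rpow_nonneg (norm_nonneg _) p)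
  have heq1 : (2*τ * (C*I)^p) ^ (1/p) = (2*τ)^(1/p) * (C*I) := by
    rw [Real.mul_rpow h2τ.le (Real.rpow_nonneg hCI p),
      ← Real.rpow_mul hCI, mul_one_div, div_self (ne_of_gt hp0), Real.rpow_one]
  have heq2 : (2*τ)^((1:ℝ)-1/p) = (2*τ)/(2*τ)^((1:ℝ)/p) := by
    rw [Real.rpow_sub h2τ, Real.rpow_one]
  have hrp : 0 < (2*τ)^((1:ℝ)/p) := Real.rpow_pos_of_pos h2τ _
  have final : (2*τ)^((1:ℝ)/p) * (C*I) = (3 + omegaFun (π/2*(1+δ))) / (2*τ)^((1:ℝ)-1/p) * I := by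
    rw [heq2, hC]
    field_simp
  calc (∫ x in (-τ)..τ, ‖∫ t in (-(δ*τ))..(δ*τ), f t * K (x - t)‖ ^ p) ^ (1/p)
      ≤ (2*τ * (C*I)^p) ^ (1/p) := lhs_le
    _ = (2*τ)^((1:ℝ)/p) * (C*I) := heq1
    _ = (3 + omegaFun (π/2*(1+δ))) / (2*τ)^((1:ℝ)-1/p) * I := final
end

section
/- Let σ > 0, 1 < p < ∞, 0 < δ < 1, τ > 0 and N = ⌊στ/π⌋. Let f ∈ B^1_σ and define F₃(x) = (1/(2τ)) ∫_{δτ ≤ |t| ≤ τ} f(t) D_N(π(x−t)/τ) dt. Then there is a constant α(p) > 0 depending only on p such that (∫_{−τ}^{τ} |F₃(x)|^p dx)^{1/p} ≤ α(p) (2σ/π + 1/τ)^{1−1/p} ∫_{δτ ≤ |t| ≤ τ} |f(t)| dt. -/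
open MeasureTheory Real Filter

lemma norm_exp_I_int_mul (k : ℤ) (ξ : ℝ) : ‖Complex.exp (Complex.I * k * ξ)‖ = 1 := by
  rw [Complex.norm_exp]
  have : (Complex.I * k * ξ).re = 0 := by simp
  rw [this, Real.exp_zero]

lemma dirichlet_norm_le (N : ℤ) (hN : 0 ≤ N) (ξ : ℝ) :
    ‖dirichlet N ξ‖ ≤ 2 * (N : ℝ) + 1 := by
  unfold dirichlet
  refine le_trans (norm_sum_le _ _) ?_
  have this1 : ∀ k ∈ Finset.Icc (-N) N, ‖Complex.exp (Complex.I * k * ξ)‖ = 1 :=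
    fun k _ => norm_exp_I_int_mul k ξ
  rw [Finset.sum_congr rfl this1, Finset.sum_const, nsmul_eq_mul, mul_one, Int.card_Icc]
  have h2 : ((N + 1 - -N).toNat : ℝ) = ((2 * N + 1 : ℤ) : ℝ) := by
    have h3 : N + 1 - -N = 2 * N + 1 := by ring
    rw [h3]
    exact_mod_cast congrArg (fun z : ℤ => (z : ℝ)) (Int.toNat_of_nonneg (show (0:ℤ) ≤ 2*N+1 by omega))
  rw [h2]; push_cast; linarith

lemma dirichlet_neg (N : ℤ) (ξ : ℝ) : dirichlet N (-ξ) = dirichlet N ξ := by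
  unfold dirichlet
  refine Finset.sum_nbij' (fun k => -k) (fun k => -k) ?_ ?_ ?_ ?_ ?_ <;>
    intros <;> simp_all [Finset.mem_Icc] <;> try omega


lemma dirichlet_two_pi_sub (N : ℤ) (ξ : ℝ) :
    dirichlet N (2 * π - ξ) = dirichlet N ξ := by
  rw [← dirichlet_neg N ξ]
  unfold dirichlet
  refine Finset.sum_congr rfl fun k _ => ?_
  have : Complex.I * k * ((2 * π - ξ : ℝ) : ℂ) = k * (2 * π * Complex.I) + Complex.I * k * ((-ξ : ℝ) : ℂ) := by
    push_cast; ring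
  rw [this, Complex.exp_add, Complex.exp_int_mul_two_pi_mul_I, one_mul]

lemma norm_exp_sub_one (ξ : ℝ) :
    ‖Complex.exp ((ξ : ℂ) * Complex.I) - 1‖ = 2 * |Real.sin (ξ / 2)| := by
  have hre : (Complex.exp ((ξ : ℂ) * Complex.I) - 1).re = Real.cos ξ - 1 := by
    simp [Complex.exp_ofReal_mul_I_re]
  have him : (Complex.exp ((ξ : ℂ) * Complex.I) - 1).im = Real.sin ξ := by
    simp [Complex.exp_ofReal_mul_I_im]
  have hsq : ‖Complex.exp ((ξ : ℂ) * Complex.I) - 1‖ ^ 2 = (2 * |Real.sin (ξ / 2)|) ^ 2 := by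
    rw [Complex.sq_norm, Complex.normSq_apply, hre, him]
    have h1 : Real.sin (ξ / 2) ^ 2 = 1 / 2 - Real.cos (2 * (ξ / 2)) / 2 :=
      Real.sin_sq_eq_half_sub (ξ / 2)
    have h2 : Real.sin ξ ^ 2 + Real.cos ξ ^ 2 = 1 := Real.sin_sq_add_cos_sq ξ
    rw [mul_pow, sq_abs]
    rw [show 2 * (ξ / 2) = ξ by ring] at h1
    nlinarith [h1, h2]
  rw [← Real.sqrt_sq (norm_nonneg _), hsq, Real.sqrt_sq (by positivity)]

lemma dirichlet_norm_le_inv_sin (N : ℤ) {ξ : ℝ} (hs : Real.sin (ξ / 2) ≠ 0) :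
    ‖dirichlet N ξ‖ ≤ 1 / |Real.sin (ξ / 2)| := by
  set z : ℂ := Complex.exp ((ξ : ℂ) * Complex.I) with hz
  have hz0 : z ≠ 0 := Complex.exp_ne_zero _
  have habs : ‖z‖ = 1 := by
    rw [hz, Complex.norm_exp]
    simp
  have hd : dirichlet N ξ = ∑ k ∈ Finset.Icc (-N) N, z ^ k := by
    unfold dirichlet
    refine Finset.sum_congr rfl fun k _ => ?_
    rw [hz, ← Complex.exp_int_mul]
    congr 1
    push_cast; ring
  have hre : dirichlet N ξ = z ^ (-N) * ∑ m ∈ Finset.range (2 * N + 1).toNat, z ^ m := by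
    rw [hd, Finset.mul_sum]
    refine Finset.sum_nbij' (i := fun k => (k + N).toNat) (j := fun m => (m : ℤ) - N)
      ?_ ?_ ?_ ?_ ?_
    · intro k hk; simp only [Finset.mem_Icc] at hk; simp only [Finset.mem_range]; omega
    · intro m hm; simp only [Finset.mem_range] at hm; simp only [Finset.mem_Icc]; omega
    · intro k hk; simp only [Finset.mem_Icc] at hk; omega
    · intro m hm; simp only [Finset.mem_range] at hm; omega
    · intro k hk
      simp only [Finset.mem_Icc] at hk
      rw [← zpow_natCast z ((k + N).toNat), ← zpow_add₀ hz0]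
      congr 1
      omega
  have hnorm1 : ‖z - 1‖ = 2 * |Real.sin (ξ / 2)| := norm_exp_sub_one ξ
  have hpos : 0 < ‖z - 1‖ := by
    rw [hnorm1]; positivity
  have key : ‖dirichlet N ξ‖ * ‖z - 1‖ ≤ 2 := by
    rw [← norm_mul, hre, mul_assoc, geom_sum_mul, norm_mul]
    have h1 : ‖z ^ (-N)‖ = 1 := by
      rw [norm_zpow, habs, one_zpow]
    have h2 : ‖z ^ (2 * N + 1).toNat - 1‖ ≤ 2 := by
      refine le_trans (norm_sub_le _ _) ?_
      rw [norm_pow, habs, one_pow, norm_one]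
      norm_num
    rw [h1, one_mul]; exact h2
  rw [hnorm1] at key
  have habs2 : 0 < |Real.sin (ξ / 2)| := abs_pos.mpr hs
  rw [le_div_iff₀ habs2]
  nlinarith [key]

lemma dirichlet_continuous (N : ℤ) : Continuous fun ξ : ℝ => dirichlet N ξ := by
  unfold dirichlet
  refine continuous_finset_sum _ fun k _ => ?_
  exact Complex.continuous_exp.comp ((continuous_const.mul Complex.continuous_ofReal))

lemma dirichlet_pow_continuous (N : ℤ) {p : ℝ} (hp : 0 ≤ p) :
    Continuous fun ξ : ℝ => ‖dirichlet N ξ‖ ^ p :=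
  Continuous.rpow_const (dirichlet_continuous N).norm (fun _ => Or.inr hp)

lemma dirichlet_pow_intable (N : ℤ) {p : ℝ} (hp : 0 ≤ p) (a b : ℝ) :
    IntervalIntegrable (fun ξ : ℝ => ‖dirichlet N ξ‖ ^ p) volume a b :=
  (dirichlet_pow_continuous N hp).intervalIntegrable a b

lemma dirichlet_integral_zero_pi (N : ℤ) (hN : 0 ≤ N) {p : ℝ} (hp : 1 < p) :
    ∫ s in (0:ℝ)..π, ‖dirichlet N s‖ ^ p
      ≤ π * (2 * (N : ℝ) + 1) ^ (p - 1) * (p / (p - 1)) := by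
  have hp0 : (0:ℝ) < p := lt_trans one_pos hp
  set M : ℝ := 2 * (N : ℝ) + 1 with hM
  have hM1 : 1 ≤ M := by
    have : (0:ℝ) ≤ (N:ℝ) := by exact_mod_cast hN
    simp only [hM]; linarith
  have hM0 : 0 < M := lt_of_lt_of_le one_pos hM1
  set a : ℝ := π / M with ha
  have ha0 : 0 < a := div_pos pi_pos hM0
  have haπ : a ≤ π := by
    rw [ha, div_le_iff₀ hM0]
    nlinarith [pi_pos]
  have hint : ∀ u v : ℝ, IntervalIntegrable (fun s => ‖dirichlet N s‖ ^ p) volume u v :=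
    dirichlet_pow_intable N hp0.le
  have hsplit : ∫ s in (0:ℝ)..π, ‖dirichlet N s‖ ^ p
      = (∫ s in (0:ℝ)..a, ‖dirichlet N s‖ ^ p) + ∫ s in a..π, ‖dirichlet N s‖ ^ p :=
    (intervalIntegral.integral_add_adjacent_intervals (hint 0 a) (hint a π)).symm
  have hb1 : ∫ s in (0:ℝ)..a, ‖dirichlet N s‖ ^ p ≤ π * M ^ (p - 1) := by
    have h1 : ∫ s in (0:ℝ)..a, ‖dirichlet N s‖ ^ p ≤ ∫ _ in (0:ℝ)..a, M ^ p := by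
      refine intervalIntegral.integral_mono_on ha0.le (hint 0 a)
        (intervalIntegrable_const) fun s _ => ?_
      exact Real.rpow_le_rpow (norm_nonneg _) (dirichlet_norm_le N hN s) hp0.le
    have h2 : ∫ _ in (0:ℝ)..a, M ^ p = a * M ^ p := by
      simp [smul_eq_mul]
    have h3 : a * M ^ p = π * M ^ (p - 1) := by
      rw [Real.rpow_sub hM0, Real.rpow_one, ha]
      field_simp
    rw [h2, h3] at h1; exact h1
  have hb2 : ∫ s in a..π, ‖dirichlet N s‖ ^ p ≤ π * M ^ (p - 1) * (1 / (p - 1)) := by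
    have hptw : ∀ s ∈ Set.Icc a π, ‖dirichlet N s‖ ^ p ≤ π ^ p * s ^ (-p) := by
      intro s hs
      have hs0 : 0 < s := lt_of_lt_of_le ha0 hs.1
      have hsin : s / π ≤ Real.sin (s / 2) := by
        have := Real.mul_le_sin (x := s / 2) (by linarith) (by nlinarith [hs.2])
        calc s / π = 2 / π * (s / 2) := by field_simp
        _ ≤ Real.sin (s / 2) := this
      have hsp : 0 < s / π := div_pos hs0 pi_pos
      have hsin0 : Real.sin (s / 2) ≠ 0 := by nlinarith
      have h1 : ‖dirichlet N s‖ ≤ 1 / |Real.sin (s / 2)| :=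
        dirichlet_norm_le_inv_sin N hsin0
      have h2 : 1 / |Real.sin (s / 2)| ≤ π / s := by
        rw [abs_of_pos (by nlinarith)]
        rw [div_le_div_iff₀ (by nlinarith) hs0, one_mul]
        have hs2 : π * (s / π) = s := by field_simp
        nlinarith [mul_le_mul_of_nonneg_left hsin pi_pos.le, hs2]
      have h3 : ‖dirichlet N s‖ ^ p ≤ (π / s) ^ p :=
        Real.rpow_le_rpow (norm_nonneg _) (le_trans h1 h2) hp0.le
      have h4 : (π / s) ^ p = π ^ p * s ^ (-p) := by
        rw [Real.div_rpow pi_pos.le hs0.le, Real.rpow_neg hs0.le, div_eq_mul_inv]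
      rw [← h4]; exact h3
    have hrint : IntervalIntegrable (fun s => π ^ p * s ^ (-p)) volume a π := by
      apply ContinuousOn.intervalIntegrable
      apply ContinuousOn.mul continuousOn_const
      intro s hs
      have hs0 : s ≠ 0 := by
        rw [Set.uIcc_of_le haπ] at hs
        exact ne_of_gt (lt_of_lt_of_le ha0 hs.1)
      exact (Real.continuousAt_rpow_const s (-p) (Or.inl hs0)).continuousWithinAt
    have h1 : ∫ s in a..π, ‖dirichlet N s‖ ^ p ≤ ∫ s in a..π, π ^ p * s ^ (-p) := by
      refine intervalIntegral.integral_mono_on haπ (hint a π) hrint fun s hs => hptw s hs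
    have h2 : ∫ s in a..π, π ^ p * s ^ (-p) = π ^ p * ((π ^ (-p+1) - a ^ (-p+1)) / (-p+1)) := by
      rw [intervalIntegral.integral_const_mul]
      congr 1
      rw [integral_rpow]
      right
      constructor
      · intro h; rw [neg_eq_iff_eq_neg] at h; linarith [h]
      · rw [Set.uIcc_of_le haπ]
        intro h0
        exact absurd rfl (ne_of_gt (lt_of_lt_of_le ha0 (Set.mem_Icc.mp h0).1))
    have h3 : π ^ p * ((π ^ (-p+1) - a ^ (-p+1)) / (-p+1)) ≤ π * M ^ (p-1) * (1/(p-1)) := by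
      have hπp : (0:ℝ) < π ^ p := Real.rpow_pos_of_pos pi_pos p
      have hπ1p : (0:ℝ) ≤ π ^ (-p+1) := (Real.rpow_pos_of_pos pi_pos _).le
      have ha1p : a ^ (-p+1) = π ^ (-p+1) * M ^ (p-1) := by
        rw [ha, Real.div_rpow pi_pos.le hM0.le, div_eq_mul_inv, ← Real.rpow_neg hM0.le,
          show -(-p+1) = p-1 by ring]
      have hne1 : -p + 1 ≠ 0 := by intro h; linarith
      have hne2 : p - 1 ≠ 0 := by intro h; linarith
      have hkey : π ^ p * ((π ^ (-p+1) - a ^ (-p+1)) / (-p+1))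
          = π ^ p * π ^ (-p+1) * (M ^ (p-1) - 1) / (p-1) := by
        rw [ha1p]
        field_simp
        ring
      have hππ : π ^ p * π ^ (-p+1) = π := by
        rw [← Real.rpow_add pi_pos, show p + (-p+1) = 1 by ring, Real.rpow_one]
      rw [hkey, hππ, mul_one_div]
      have hMp1 : (0:ℝ) < M ^ (p-1) := Real.rpow_pos_of_pos hM0 _
      gcongr
      · linarith
    calc ∫ s in a..π, ‖dirichlet N s‖ ^ p ≤ ∫ s in a..π, π ^ p * s ^ (-p) := h1
    _ = π ^ p * ((π ^ (-p+1) - a ^ (-p+1)) / (-p+1)) := h2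
    _ ≤ π * M ^ (p-1) * (1/(p-1)) := h3
  rw [hsplit]
  have hne2 : p - 1 ≠ 0 := by intro h; linarith
  have hfin : π * M ^ (p-1) + π * M ^ (p-1) * (1/(p-1)) = π * M ^ (p-1) * (p/(p-1)) := by
    field_simp
    ring
  linarith [hb1, hb2]

lemma dirichlet_integral_sym (N : ℤ) (hN : 0 ≤ N) {p : ℝ} (hp : 1 < p) :
    ∫ s in (-(2*π))..(2*π), ‖dirichlet N s‖ ^ p
      ≤ 4 * (π * (2 * (N : ℝ) + 1) ^ (p - 1) * (p / (p - 1))) := by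
  have hp0 : (0:ℝ) ≤ p := by linarith
  have hint := dirichlet_pow_intable N hp0
  have hI1 : ∫ s in (-(2*π))..(0:ℝ), ‖dirichlet N s‖ ^ p
      = ∫ s in (0:ℝ)..(2*π), ‖dirichlet N s‖ ^ p := by
    have := intervalIntegral.integral_comp_neg (a := (0:ℝ)) (b := 2*π)
      (fun s => ‖dirichlet N s‖ ^ p)
    rw [neg_zero] at this
    rw [← this]
    refine intervalIntegral.integral_congr fun s _ => ?_
    rw [dirichlet_neg]
  have hI2 : ∫ s in π..(2*π), ‖dirichlet N s‖ ^ p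
      = ∫ s in (0:ℝ)..π, ‖dirichlet N s‖ ^ p := by
    have := intervalIntegral.integral_comp_sub_left (a := (0:ℝ)) (b := π)
      (fun s => ‖dirichlet N s‖ ^ p) (2*π)
    rw [sub_zero, show 2*π - π = π by ring] at this
    rw [← this]
    refine intervalIntegral.integral_congr fun s _ => ?_
    rw [dirichlet_two_pi_sub]
  have hsplit1 : ∫ s in (-(2*π))..(2*π), ‖dirichlet N s‖ ^ p
      = (∫ s in (-(2*π))..(0:ℝ), ‖dirichlet N s‖ ^ p)
        + ∫ s in (0:ℝ)..(2*π), ‖dirichlet N s‖ ^ p :=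
    (intervalIntegral.integral_add_adjacent_intervals (hint _ _) (hint _ _)).symm
  have hsplit2 : ∫ s in (0:ℝ)..(2*π), ‖dirichlet N s‖ ^ p
      = (∫ s in (0:ℝ)..π, ‖dirichlet N s‖ ^ p)
        + ∫ s in π..(2*π), ‖dirichlet N s‖ ^ p :=
    (intervalIntegral.integral_add_adjacent_intervals (hint _ _) (hint _ _)).symm
  have h0π := dirichlet_integral_zero_pi N hN hp
  rw [hsplit1, hI1, hsplit2, hI2]
  linarith

lemma dirichlet_x_integral (N : ℤ) (hN : 0 ≤ N) {p : ℝ} (hp : 1 < p)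
    {τ t : ℝ} (hτ : 0 < τ) (ht : |t| ≤ τ) :
    ∫ x in (-τ)..τ, ‖dirichlet N (π * (x - t) / τ)‖ ^ p
      ≤ 4 * τ * (2 * (N : ℝ) + 1) ^ (p - 1) * (p / (p - 1)) := by
  have hp0 : (0:ℝ) ≤ p := by linarith
  have hπτ : π / τ ≠ 0 := ne_of_gt (div_pos pi_pos hτ)
  have harg : ∀ x : ℝ, π * (x - t) / τ = π / τ * (x - t) := fun x => by ring
  have h1 : ∫ x in (-τ)..τ, ‖dirichlet N (π * (x - t) / τ)‖ ^ p
      = ∫ y in (-τ - t)..(τ - t), ‖dirichlet N (π / τ * y)‖ ^ p := by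
    simp only [harg]
    exact intervalIntegral.integral_comp_sub_right
      (fun y => ‖dirichlet N (π / τ * y)‖ ^ p) t
  have hg : Continuous fun y : ℝ => ‖dirichlet N (π / τ * y)‖ ^ p :=
    (dirichlet_pow_continuous N hp0).comp (continuous_const.mul continuous_id)
  have h2 : ∫ y in (-τ - t)..(τ - t), ‖dirichlet N (π / τ * y)‖ ^ p
      ≤ ∫ y in (-(2*τ))..(2*τ), ‖dirichlet N (π / τ * y)‖ ^ p := by
    have habs := abs_le.mp ht
    refine intervalIntegral.integral_mono_interval (by linarith) (by linarith) (by linarith)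
      (Eventually.of_forall fun y => by positivity) (hg.intervalIntegrable _ _)
  have h3 : ∫ y in (-(2*τ))..(2*τ), ‖dirichlet N (π / τ * y)‖ ^ p
      = (π / τ)⁻¹ * ∫ s in (-(2*π))..(2*π), ‖dirichlet N s‖ ^ p := by
    rw [intervalIntegral.integral_comp_mul_left (fun s => ‖dirichlet N s‖ ^ p) hπτ]
    rw [show π / τ * -(2*τ) = -(2*π) by field_simp,
      show π / τ * (2*τ) = 2*π by field_simp, smul_eq_mul]
  have h4 := dirichlet_integral_sym N hN hp
  have h5 : (π / τ)⁻¹ * ∫ s in (-(2*π))..(2*π), ‖dirichlet N s‖ ^ p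
      ≤ (π / τ)⁻¹ * (4 * (π * (2 * (N : ℝ) + 1) ^ (p - 1) * (p / (p - 1)))) := by
    apply mul_le_mul_of_nonneg_left h4
    positivity
  have h6 : (π / τ)⁻¹ * (4 * (π * (2 * (N : ℝ) + 1) ^ (p - 1) * (p / (p - 1))))
      = 4 * τ * (2 * (N : ℝ) + 1) ^ (p - 1) * (p / (p - 1)) := by
    have hne : p - 1 ≠ 0 := by intro h; linarith
    rw [inv_div]
    field_simp [hne]
  calc ∫ x in (-τ)..τ, ‖dirichlet N (π * (x - t) / τ)‖ ^ p
      = ∫ y in (-τ - t)..(τ - t), ‖dirichlet N (π / τ * y)‖ ^ p := h1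
    _ ≤ ∫ y in (-(2*τ))..(2*τ), ‖dirichlet N (π / τ * y)‖ ^ p := h2
    _ = (π / τ)⁻¹ * ∫ s in (-(2*π))..(2*π), ‖dirichlet N s‖ ^ p := h3
    _ ≤ _ := h5
    _ = _ := h6

/-- Estimate (2.14): there is `α(p) > 0` depending only on `p` such that for
`f ∈ B^1_σ` and `F₃(x) = (1/(2τ)) ∫_{δτ ≤ |t| ≤ τ} f(t) D_N(π(x−t)/τ) dt`, one has
`(∫_{−τ}^{τ} |F₃|^p)^{1/p} ≤ α(p) (2σ/π + 1/τ)^{1−1/p} ∫_{δτ ≤ |t| ≤ τ} |f|`. -/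
theorem F3_estimate (p : ℝ) (hp1 : 1 < p) :
    ∃ α : ℝ, 0 < α ∧
      ∀ σ : ℝ, 0 < σ → ∀ δ τ : ℝ, 0 < δ → δ < 1 → 0 < τ →
        ∀ f : ℝ → ℂ, MemBernstein σ 1 f →
          (∫ x in (-τ)..τ,
              ‖(1 / (2 * τ) : ℂ) *
                  ∫ t in {t : ℝ | δ * τ ≤ |t| ∧ |t| ≤ τ},
                    f t * dirichlet (bernN σ τ) (π * (x - t) / τ)‖ ^ p)
              ^ (1 / p) ≤
            α * (2 * σ / π + 1 / τ) ^ (1 - 1 / p) *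
              ∫ t in {t : ℝ | δ * τ ≤ |t| ∧ |t| ≤ τ}, ‖f t‖ := by
  have hp0 : (0:ℝ) < p := lt_trans one_pos hp1
  have hpne : p ≠ 0 := ne_of_gt hp0
  have hpm1 : (0:ℝ) < p - 1 := by linarith
  set c : ℝ := (4 * (p / (p - 1))) ^ (1 / p) with hc
  have hc0 : 0 < c := Real.rpow_pos_of_pos (by positivity) _
  refine ⟨c / 2, by positivity, ?_⟩
  intro σ hσ δ τ hδ0 hδ1 hτ f hf
  -- notation
  set N : ℤ := bernN σ τ with hNdef
  have hN0 : 0 ≤ N := Int.floor_nonneg.mpr (by positivity)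
  set M : ℝ := 2 * (N : ℝ) + 1 with hMdef
  have hN0' : (0:ℝ) ≤ (N : ℝ) := by exact_mod_cast hN0
  have hM1 : 1 ≤ M := by simp only [hMdef]; linarith
  have hM0 : 0 < M := lt_of_lt_of_le one_pos hM1
  set E : Set ℝ := {t : ℝ | δ * τ ≤ |t| ∧ |t| ≤ τ} with hEdef
  have hEclosed : IsClosed E := by
    have : E = {t : ℝ | δ * τ ≤ |t|} ∩ {t : ℝ | |t| ≤ τ} := rfl
    rw [this]
    exact (isClosed_le continuous_const continuous_abs).inter
      (isClosed_le continuous_abs continuous_const)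
  have hEmeas : MeasurableSet E := hEclosed.measurableSet
  have hEsub : E ⊆ Set.Icc (-τ) τ := by
    intro t ht
    have := abs_le.mp ht.2
    exact ⟨this.1, this.2⟩
  have hEcomp : IsCompact E := isCompact_Icc.of_isClosed_subset hEclosed hEsub
  -- continuity of f
  obtain ⟨hfL, F, hFd, _, hFeq⟩ := hf
  have hfc : Continuous f := (hFd.continuous.comp Complex.continuous_ofReal).congr fun x => hFeq x
  have hgc : Continuous fun t : ℝ => ‖f t‖ := hfc.norm
  obtain ⟨Cf0, hCf0⟩ := hEcomp.exists_bound_of_continuousOn hfc.continuousOn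
  set Cf : ℝ := max Cf0 0 with hCfdef
  have hCf0' : 0 ≤ Cf := le_max_right _ _
  have hCf : ∀ t ∈ E, ‖f t‖ ≤ Cf := fun t ht => le_trans (hCf0 t ht) (le_max_left _ _)
  -- measures
  set μt : Measure ℝ := volume.restrict E with hμt
  set μx : Measure ℝ := volume.restrict (Set.Ioc (-τ) τ) with hμx
  haveI hμtf : IsFiniteMeasure μt := by
    constructor
    rw [hμt, Measure.restrict_apply_univ]
    exact lt_of_le_of_lt (measure_mono hEsub) measure_Icc_lt_top
  haveI hμxf : IsFiniteMeasure μx := by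
    constructor
    rw [hμx, Measure.restrict_apply_univ]
    exact measure_Ioc_lt_top
  -- conjugate exponent
  set q : ℝ := Real.conjExponent p with hqdef
  have hpq : p.HolderConjugate q := Real.HolderConjugate.conjExponent hp1
  have hq0 : 0 < q := hpq.symm.pos
  have hinv : 1 / p + 1 / q = 1 := by
    rw [one_div, one_div]; exact hpq.inv_add_inv_eq_one
  -- basic quantities
  set I₁ : ℝ := ∫ t in E, ‖f t‖ with hI₁def
  have hI₁0 : 0 ≤ I₁ := by
    rw [hI₁def]
    exact integral_nonneg fun t => norm_nonneg _
  set S : ℝ := 4 * τ * M ^ (p - 1) * (p / (p - 1)) with hSdef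
  have hS0 : 0 < S := by
    have : (0:ℝ) < M ^ (p-1) := Real.rpow_pos_of_pos hM0 _
    rw [hSdef]; positivity
  set K : ℝ → ℝ → ℝ := fun x t => ‖dirichlet N (π * (x - t) / τ)‖ with hKdef
  have hKcont : Continuous fun z : ℝ × ℝ => K z.1 z.2 := by
    apply Continuous.norm
    exact (dirichlet_continuous N).comp
      (by fun_prop : Continuous fun z : ℝ × ℝ => π * (z.1 - z.2) / τ)
  have hKcont1 : ∀ x : ℝ, Continuous fun t : ℝ => K x t := by
    intro x
    apply Continuous.norm
    exact (dirichlet_continuous N).comp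
      (by fun_prop : Continuous fun t : ℝ => π * (x - t) / τ)
  have hKle : ∀ x t, K x t ≤ M := fun x t => dirichlet_norm_le N hN0 _
  have hK0 : ∀ x t, 0 ≤ K x t := fun x t => norm_nonneg _
  -- Step A : pointwise Hölder bound
  have hA : ∀ x : ℝ,
      ‖(1 / (2 * τ) : ℂ) * ∫ t in E, f t * dirichlet N (π * (x - t) / τ)‖ ^ p
        ≤ (1 / (2 * τ)) ^ p * I₁ ^ (p - 1) * ∫ t in E, ‖f t‖ * K x t ^ p := by
    intro x
    have ha1 : ‖(1 / (2 * τ) : ℂ)‖ = 1 / (2 * τ) := by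
      have hcast : (1 / (2 * τ) : ℂ) = ((1 / (2 * τ) : ℝ) : ℂ) := by push_cast; ring
      rw [hcast, Complex.norm_real, Real.norm_eq_abs, abs_of_pos (by positivity)]
    have ha2 : ‖∫ t in E, f t * dirichlet N (π * (x - t) / τ)‖
        ≤ ∫ t in E, ‖f t‖ * K x t := by
      refine le_trans (norm_integral_le_integral_norm _) ?_
      refine le_of_eq (integral_congr_ae (Eventually.of_forall fun t => ?_))
      simp only [norm_mul]
      rfl
    -- Hölder
    set u : ℝ → ℝ := fun t => ‖f t‖ ^ (1 / q) with hu
    set v : ℝ → ℝ := fun t => ‖f t‖ ^ (1 / p) * K x t with hv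
    have hucont : Continuous u := hgc.rpow_const fun _ => Or.inr (by positivity)
    have hvcont : Continuous v :=
      (hgc.rpow_const fun _ => Or.inr (by positivity)).mul (hKcont1 x)
    have humem : MemLp u (ENNReal.ofReal q) μt := by
      refine MemLp.of_bound hucont.aestronglyMeasurable (Cf ^ (1 / q)) ?_
      rw [hμt]
      filter_upwards [ae_restrict_mem hEmeas] with t ht
      rw [Real.norm_eq_abs, abs_of_nonneg (Real.rpow_nonneg (norm_nonneg _) _)]
      exact Real.rpow_le_rpow (norm_nonneg _) (hCf t ht) (by positivity)
    have hvmem : MemLp v (ENNReal.ofReal p) μt := by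
      refine MemLp.of_bound hvcont.aestronglyMeasurable (Cf ^ (1 / p) * M) ?_
      rw [hμt]
      filter_upwards [ae_restrict_mem hEmeas] with t ht
      rw [Real.norm_eq_abs, abs_of_nonneg (mul_nonneg (Real.rpow_nonneg (norm_nonneg _) _) (hK0 x t))]
      exact mul_le_mul (Real.rpow_le_rpow (norm_nonneg _) (hCf t ht) (by positivity))
        (hKle x t) (hK0 x t) (by positivity)
    have hHol := integral_mul_le_Lp_mul_Lq_of_nonneg hpq.symm
      (Eventually.of_forall fun t => Real.rpow_nonneg (norm_nonneg _) _)
      (Eventually.of_forall fun t => mul_nonneg (Real.rpow_nonneg (norm_nonneg _) _) (hK0 x t))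
      humem hvmem
    have huv : ∀ t, u t * v t = ‖f t‖ * K x t := by
      intro t
      rw [hu, hv]
      dsimp only
      rw [← mul_assoc, ← Real.rpow_add' (norm_nonneg _) (by rw [add_comm]; rw [hinv]; norm_num)]
      rw [show 1/q + 1/p = 1 by linarith [hinv], Real.rpow_one]
    have huq : ∀ t, u t ^ q = ‖f t‖ := by
      intro t
      rw [hu]
      dsimp only
      rw [← Real.rpow_mul (norm_nonneg _), one_div, inv_mul_cancel₀ (ne_of_gt hq0), Real.rpow_one]
    have hvp : ∀ t, v t ^ p = ‖f t‖ * K x t ^ p := by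
      intro t
      rw [hv]
      dsimp only
      rw [Real.mul_rpow (Real.rpow_nonneg (norm_nonneg _) _) (hK0 x t),
        ← Real.rpow_mul (norm_nonneg _), one_div, inv_mul_cancel₀ hpne, Real.rpow_one]
    have hHol2 : ∫ t in E, ‖f t‖ * K x t
        ≤ I₁ ^ (1 / q) * (∫ t in E, ‖f t‖ * K x t ^ p) ^ (1 / p) := by
      have e1 : ∫ t in E, u t * v t = ∫ t in E, ‖f t‖ * K x t :=
        integral_congr_ae (Eventually.of_forall fun t => huv t)
      have e2 : ∫ t in E, u t ^ q = I₁ :=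
        integral_congr_ae (Eventually.of_forall fun t => huq t)
      have e3 : ∫ t in E, v t ^ p = ∫ t in E, ‖f t‖ * K x t ^ p :=
        integral_congr_ae (Eventually.of_forall fun t => hvp t)
      calc ∫ t in E, ‖f t‖ * K x t = ∫ t in E, u t * v t := e1.symm
      _ ≤ (∫ t in E, u t ^ q) ^ (1/q) * (∫ t in E, v t ^ p) ^ (1/p) := hHol
      _ = I₁ ^ (1/q) * (∫ t in E, ‖f t‖ * K x t ^ p) ^ (1/p) := by rw [e2, e3]
    -- combine
    set J : ℝ := ∫ t in E, ‖f t‖ * K x t ^ p with hJdef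
    have hJ0 : 0 ≤ J := by
      rw [hJdef]
      exact integral_nonneg fun t => mul_nonneg (norm_nonneg _)
        (Real.rpow_nonneg (hK0 x t) _)
    have hstep : ‖(1 / (2 * τ) : ℂ) * ∫ t in E, f t * dirichlet N (π * (x - t) / τ)‖
        ≤ 1 / (2 * τ) * (I₁ ^ (1/q) * J ^ (1/p)) := by
      rw [norm_mul, ha1]
      refine mul_le_mul_of_nonneg_left ?_ (by positivity)
      exact le_trans ha2 hHol2
    have hfin := Real.rpow_le_rpow (norm_nonneg _) hstep hp0.le
    refine le_trans hfin (le_of_eq ?_)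
    have hqp : 1 / q * p = p - 1 := by
      have h1 : 1 / q = 1 - 1 / p := by linarith
      rw [h1, sub_mul, one_mul, one_div, inv_mul_cancel₀ hpne]
    rw [Real.mul_rpow (by positivity)
        (mul_nonneg (Real.rpow_nonneg hI₁0 _) (Real.rpow_nonneg hJ0 _)),
      Real.mul_rpow (Real.rpow_nonneg hI₁0 _) (Real.rpow_nonneg hJ0 _),
      ← Real.rpow_mul hI₁0, ← Real.rpow_mul hJ0, hqp,
      show 1 / p * p = 1 by field_simp, Real.rpow_one]
    ring
  -- Step B : integrate in x
  set W : ℝ → ℝ → ℝ := fun x t => ‖f t‖ * K x t ^ p with hWdef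
  have hWcont : Continuous fun z : ℝ × ℝ => W z.1 z.2 :=
    (hgc.comp continuous_snd).mul (hKcont.rpow_const fun _ => Or.inr hp0.le)
  have hWnonneg : ∀ x t, 0 ≤ W x t := fun x t =>
    mul_nonneg (norm_nonneg _) (Real.rpow_nonneg (hK0 x t) _)
  have hWint : Integrable (Function.uncurry W) (μx.prod μt) := by
    refine Integrable.mono' (integrable_const (Cf * M ^ p)) hWcont.aestronglyMeasurable ?_
    rw [hμx, hμt, Measure.prod_restrict]
    filter_upwards [ae_restrict_mem (measurableSet_Ioc.prod hEmeas)] with z hz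
    rcases hz with ⟨hz1, hz2⟩
    have hzz : Function.uncurry W z = W z.1 z.2 := rfl
    rw [Real.norm_eq_abs, hzz, abs_of_nonneg (hWnonneg _ _)]
    exact mul_le_mul (hCf _ hz2) (Real.rpow_le_rpow (hK0 _ _) (hKle _ _) hp0.le)
      (Real.rpow_nonneg (hK0 _ _) _) hCf0'
  have hswap : ∫ x, (∫ t, W x t ∂μt) ∂μx = ∫ t, (∫ x, W x t ∂μx) ∂μt :=
    integral_integral_swap hWint
  have hinner : ∀ t ∈ E, ∫ x, W x t ∂μx ≤ ‖f t‖ * S := by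
    intro t ht
    have h1 : ∫ x, W x t ∂μx = ‖f t‖ * ∫ x, K x t ^ p ∂μx := integral_const_mul _ _
    have h2 : ∫ x, K x t ^ p ∂μx ≤ S := by
      have := dirichlet_x_integral N hN0 hp1 hτ ht.2
      rw [intervalIntegral.integral_of_le (by linarith : -τ ≤ τ)] at this
      exact this
    rw [h1]
    exact mul_le_mul_of_nonneg_left h2 (norm_nonneg _)
  have hIto : ∫ t, (∫ x, W x t ∂μx) ∂μt ≤ S * I₁ := by
    have hgint : Integrable (fun t => ‖f t‖ * S) μt :=
      (hgc.continuousOn.integrableOn_compact hEcomp).mul_const S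
    refine le_trans (integral_mono_of_nonneg ?_ hgint ?_) ?_
    · exact Eventually.of_forall fun t => integral_nonneg fun x => hWnonneg x t
    · rw [hμt]
      filter_upwards [ae_restrict_mem hEmeas] with t ht
      exact hinner t ht
    · rw [integral_mul_const]
      rw [mul_comm]
  have hB : (∫ x in (-τ)..τ,
        ‖(1 / (2 * τ) : ℂ) * ∫ t in E, f t * dirichlet N (π * (x - t) / τ)‖ ^ p)
      ≤ (1 / (2 * τ)) ^ p * I₁ ^ (p - 1) * (S * I₁) := by
    rw [intervalIntegral.integral_of_le (by linarith : -τ ≤ τ)]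
    have hub : Integrable (fun x => ∫ t, W x t ∂μt) μx := hWint.integral_prod_left
    have hmono : (∫ x, ‖(1 / (2 * τ) : ℂ) * ∫ t in E, f t * dirichlet N (π * (x - t) / τ)‖ ^ p ∂μx)
        ≤ ∫ x, (1 / (2 * τ)) ^ p * I₁ ^ (p - 1) * ∫ t, W x t ∂μt ∂μx := by
      refine integral_mono_of_nonneg
        (Eventually.of_forall fun x => Real.rpow_nonneg (norm_nonneg _) _)
        ((hub.const_mul _)) (Eventually.of_forall fun x => hA x)
    refine le_trans hmono ?_
    rw [integral_const_mul, hswap]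
    exact mul_le_mul_of_nonneg_left hIto (by positivity)
  -- Step C : conclude
  have hL0 : 0 ≤ ∫ x in (-τ)..τ,
      ‖(1 / (2 * τ) : ℂ) * ∫ t in E, f t * dirichlet N (π * (x - t) / τ)‖ ^ p :=
    intervalIntegral.integral_nonneg (by linarith)
      (fun x _ => Real.rpow_nonneg (norm_nonneg _) _)
  have hrp := Real.rpow_le_rpow hL0 hB (by positivity : (0:ℝ) ≤ 1 / p)
  refine le_trans hrp ?_
  -- simplify the right-hand side
  have hIp : I₁ ^ (p - 1) * I₁ = I₁ ^ p := by
    rw [show p = (p - 1) + 1 by ring, Real.rpow_add' hI₁0 (by intro h; linarith),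
      Real.rpow_one]
    ring_nf
  have hBa : (1 / (2 * τ)) ^ p * I₁ ^ (p - 1) * (S * I₁)
      = (1 / (2 * τ)) ^ p * I₁ ^ p * S := by
    rw [← hIp]; ring
  have hexp : ((1 / (2 * τ)) ^ p * I₁ ^ p * S) ^ (1 / p)
      = 1 / (2 * τ) * I₁ * S ^ (1 / p) := by
    rw [Real.mul_rpow (mul_nonneg (Real.rpow_nonneg (by positivity) _) (Real.rpow_nonneg hI₁0 _)) hS0.le,
      Real.mul_rpow (Real.rpow_nonneg (by positivity) _) (Real.rpow_nonneg hI₁0 _),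
      ← Real.rpow_mul (by positivity : (0:ℝ) ≤ 1 / (2 * τ)),
      ← Real.rpow_mul hI₁0, mul_one_div_cancel hpne, Real.rpow_one, Real.rpow_one]
  rw [hBa, hexp]
  -- final constant computation
  have h1p : (0:ℝ) ≤ 1 - 1 / p := by
    have : 1 / p < 1 := by rw [div_lt_one hp0]; exact hp1
    linarith
  have hSp : S ^ (1 / p) = c * (τ ^ (1 / p) * M ^ (1 - 1 / p)) := by
    have hS' : S = 4 * (p / (p - 1)) * (τ * M ^ (p - 1)) := by rw [hSdef]; ring
    rw [hS', Real.mul_rpow (by positivity)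
        (mul_nonneg hτ.le (Real.rpow_nonneg hM0.le _)),
      Real.mul_rpow hτ.le (Real.rpow_nonneg hM0.le _),
      ← Real.rpow_mul hM0.le, hc]
    congr 2
    field_simp
  have hMτ : M / τ ≤ 2 * σ / π + 1 / τ := by
    have hfl : (N : ℝ) ≤ σ * τ / π := Int.floor_le _
    rw [div_le_iff₀ hτ, hMdef]
    have he : (2 * σ / π + 1 / τ) * τ = 2 * (σ * τ / π) + 1 := by field_simp
    rw [he]
    linarith
  have hMτp : (M / τ) ^ (1 - 1 / p) ≤ (2 * σ / π + 1 / τ) ^ (1 - 1 / p) :=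
    Real.rpow_le_rpow (by positivity) hMτ h1p
  have hkey : 1 / (2 * τ) * I₁ * S ^ (1 / p)
      = c / 2 * (M / τ) ^ (1 - 1 / p) * I₁ := by
    rw [hSp, Real.div_rpow hM0.le hτ.le]
    have hτsplit : τ ^ (1 / p) = τ / τ ^ (1 - 1 / p) := by
      rw [eq_div_iff (ne_of_gt (Real.rpow_pos_of_pos hτ _)), ← Real.rpow_add hτ,
        show 1 / p + (1 - 1 / p) = 1 by ring, Real.rpow_one]
    rw [hτsplit]
    have hτp0 : τ ^ (1 - 1 / p) ≠ 0 := ne_of_gt (Real.rpow_pos_of_pos hτ _)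
    field_simp
  rw [hkey]
  have : c / 2 * (M / τ) ^ (1 - 1 / p) * I₁ ≤ c / 2 * (2 * σ / π + 1 / τ) ^ (1 - 1 / p) * I₁ := by
    have := mul_le_mul_of_nonneg_left hMτp (by positivity : (0:ℝ) ≤ c / 2)
    exact mul_le_mul_of_nonneg_right this hI₁0
  exact this
end

section
/- Let σ > 0, 1 ≤ p < ∞, and let F be a bounded continuous function on ℝ that extends to an entire function of exponential type at most σ (i.e., F ∈ B^∞_σ), with ‖F‖_{L^∞(ℝ)} ≤ M for some M > 0. Suppose τ ≥ π/σ and there exists x₀ ∈ [−τ, τ] with |F(x₀)| ≥ a for some 0 < a ≤ M. Then ∫_{−τ}^{τ} |F(y)|^p dy ≥ a^{p+1} / (2^{p+1} σ M). -/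
open MeasureTheory Real Filter

lemma my_exp_le_quad {v : ℝ} (hv : v ≤ 0) : Real.exp v ≤ 1 + v + v^2/2 := by
  have key : AntitoneOn (fun v : ℝ => 1 + v + v^2/2 - Real.exp v) (Set.Iic 0) := by
    apply antitoneOn_of_deriv_nonpos (convex_Iic 0)
    · fun_prop
    · fun_prop
    · intro x hx
      have h : HasDerivAt (fun v : ℝ => 1 + v + v^2/2 - Real.exp v)
          (1 + x - Real.exp x) x := by
        have := (((hasDerivAt_id x).const_add 1).add (((hasDerivAt_id x).pow 2).div_const 2)).sub
          (Real.hasDerivAt_exp x)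
        exact this.congr_deriv (by simp only [id_eq, Nat.cast_ofNat]; ring)
      rw [h.deriv]
      have := Real.add_one_le_exp x
      linarith
  have h0 := key (Set.mem_Iic.2 hv) (Set.mem_Iic.2 le_rfl) hv
  simp at h0
  linarith

lemma my_cubic_le_exp {v : ℝ} (hv : v ≤ 0) : 1 + v + v^2/2 + v^3/6 ≤ Real.exp v := by
  have key : AntitoneOn (fun v : ℝ => Real.exp v - (1 + v + v^2/2 + v^3/6)) (Set.Iic 0) := by
    apply antitoneOn_of_deriv_nonpos (convex_Iic 0)
    · fun_prop
    · fun_prop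
    · intro x hx
      rw [interior_Iic] at hx
      have h : HasDerivAt (fun v : ℝ => Real.exp v - (1 + v + v^2/2 + v^3/6))
          (Real.exp x - (1 + x + x^2/2)) x := by
        have := (Real.hasDerivAt_exp x).sub ((((hasDerivAt_id x).const_add 1).add
          (((hasDerivAt_id x).pow 2).div_const 2)).add (((hasDerivAt_id x).pow 3).div_const 6))
        exact this.congr_deriv (by simp only [id_eq, Nat.cast_ofNat]; ring)
      rw [h.deriv]
      have := my_exp_le_quad (le_of_lt hx)
      linarith
  have h0 := key (Set.mem_Iic.2 hv) (Set.mem_Iic.2 le_rfl) hv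
  simp at h0
  linarith

lemma my_exp_le_quart {v : ℝ} (hv : v ≤ 0) :
    Real.exp v ≤ 1 + v + v^2/2 + v^3/6 + v^4/24 := by
  have key : AntitoneOn (fun v : ℝ => 1 + v + v^2/2 + v^3/6 + v^4/24 - Real.exp v)
      (Set.Iic 0) := by
    apply antitoneOn_of_deriv_nonpos (convex_Iic 0)
    · fun_prop
    · fun_prop
    · intro x hx
      rw [interior_Iic] at hx
      have h : HasDerivAt (fun v : ℝ => 1 + v + v^2/2 + v^3/6 + v^4/24 - Real.exp v)
          (1 + x + x^2/2 + x^3/6 - Real.exp x) x := by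
        have := (((((hasDerivAt_id x).const_add 1).add
          (((hasDerivAt_id x).pow 2).div_const 2)).add
          (((hasDerivAt_id x).pow 3).div_const 6)).add
          (((hasDerivAt_id x).pow 4).div_const 24)).sub (Real.hasDerivAt_exp x)
        exact this.congr_deriv (by simp only [id_eq, Nat.cast_ofNat]; ring)
      rw [h.deriv]
      have := my_cubic_le_exp (le_of_lt hx)
      linarith
  have h0 := key (Set.mem_Iic.2 hv) (Set.mem_Iic.2 le_rfl) hv
  simp at h0
  linarith

lemma my_exp13 : Real.exp 1.3 ≤ 3.6706 := by
  have h3 : Real.exp 0.3 ≤ 1.35026 := by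
    have hb := Real.exp_bound (x := 0.3) (by rw [abs_of_nonneg] <;> norm_num) (n := 4) (by norm_num)
    rw [abs_le] at hb
    have h2 := hb.2
    have habs : |(0.3:ℝ)| = 0.3 := by rw [abs_of_nonneg]; norm_num
    rw [habs] at h2
    norm_num [Finset.sum_range_succ, Nat.factorial] at h2 ⊢
    linarith
  have h1 : Real.exp 1.3 = Real.exp 1 * Real.exp 0.3 := by
    rw [← Real.exp_add]; norm_num
  have he := Real.exp_one_lt_d9
  have hpos := Real.exp_pos 0.3
  rw [h1]
  nlinarith

lemma my_pointwise (t : ℝ) (h1 : t ≤ 1) :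
    Real.exp (1.3 * t) ≤ 3.6706 * (1 + (1.3*(t-1)) + (1.3*(t-1))^2/2
      + (1.3*(t-1))^3/6 + (1.3*(t-1))^4/24) := by
  have hv : (1.3 : ℝ) * (t - 1) ≤ 0 := by nlinarith
  have h2 : Real.exp (1.3 * t) = Real.exp 1.3 * Real.exp (1.3*(t-1)) := by
    rw [← Real.exp_add]; ring_nf
  have h3 := my_exp_le_quart hv
  have h4 : (0:ℝ) < Real.exp (1.3*(t-1)) := Real.exp_pos _
  rw [h2]
  have h5 := my_exp13
  nlinarith [Real.exp_pos (1.3 : ℝ)]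

lemma my_abs_sin_moment (k : ℕ) :
    ∫ θ in (0:ℝ)..(2*π), |Real.sin θ|^k = 2 * ∫ θ in (0:ℝ)..π, Real.sin θ^k := by
  have hπ := Real.pi_pos
  have hint : Continuous fun θ : ℝ => |Real.sin θ|^k := by fun_prop
  have h1 : ∫ θ in (0:ℝ)..π, |Real.sin θ|^k = ∫ θ in (0:ℝ)..π, Real.sin θ^k := by
    apply intervalIntegral.integral_congr
    intro θ hθ
    rw [Set.uIcc_of_le hπ.le] at hθ
    have := abs_of_nonneg (Real.sin_nonneg_of_nonneg_of_le_pi hθ.1 hθ.2)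
    simp only [this]
  have h2 : ∫ θ in π..(2*π), |Real.sin θ|^k = ∫ θ in (0:ℝ)..π, |Real.sin θ|^k := by
    have := intervalIntegral.integral_comp_add_right (a := 0) (b := π)
      (fun θ => |Real.sin θ|^k) π
    rw [zero_add, ← two_mul] at this
    rw [← this]
    apply intervalIntegral.integral_congr
    intro θ _
    simp [Real.sin_add_pi, abs_neg]
  have h3 := intervalIntegral.integral_add_adjacent_intervals
    (a := 0) (b := π) (c := 2*π) (f := fun θ => |Real.sin θ|^k) (μ := MeasureTheory.volume)
    (hint.intervalIntegrable _ _) (hint.intervalIntegrable _ _)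
  rw [← h3, h2, h1]; ring

lemma my_moment1 : ∫ θ in (0:ℝ)..(2*π), |Real.sin θ| = 4 := by
  have h := my_abs_sin_moment 1
  have ho : ∫ θ in (0:ℝ)..π, Real.sin θ = 2 := by norm_num [integral_sin]
  simp only [pow_one] at h
  rw [h, ho]; norm_num

lemma my_moment2 : ∫ θ in (0:ℝ)..(2*π), |Real.sin θ|^2 = π := by
  have h := my_abs_sin_moment 2
  have he : ∫ θ in (0:ℝ)..π, Real.sin θ ^ 2 = π/2 := by
    norm_num [integral_sin_sq]
  rw [h, he]; ring

lemma my_moment3 : ∫ θ in (0:ℝ)..(2*π), |Real.sin θ|^3 = 8/3 := by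
  have h := my_abs_sin_moment 3
  have ho : ∫ θ in (0:ℝ)..π, Real.sin θ ^ 3 = 4/3 := by
    have h3 := integral_sin_pow (a := 0) (b := π) 1
    have ho1 : ∫ θ in (0:ℝ)..π, Real.sin θ ^ 1 = 2 := by
      simp only [pow_one]; norm_num [integral_sin]
    rw [ho1] at h3
    norm_num [Real.sin_pi] at h3
    convert h3 using 2 <;> norm_num
  rw [h, ho]; norm_num

lemma my_moment4 : ∫ θ in (0:ℝ)..(2*π), |Real.sin θ|^4 = 3*π/4 := by
  have h := my_abs_sin_moment 4
  have he : ∫ θ in (0:ℝ)..π, Real.sin θ ^ 4 = 3*π/8 := by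
    have h4 := integral_sin_pow (a := 0) (b := π) 2
    norm_num [Real.sin_pi, integral_sin_sq] at h4
    rw [h4]; ring
  rw [h, he]; ring

lemma my_poly_int (A B C D E : ℝ) :
    ∫ θ in (0:ℝ)..(2*π), (A + B*|Real.sin θ| + C*|Real.sin θ|^2 + D*|Real.sin θ|^3
      + E*|Real.sin θ|^4)
    = (2*A + C + (3/4)*E)*π + 4*B + (8/3)*D := by
  have hπ := Real.pi_pos
  have c1 : Continuous fun θ : ℝ => A + B*|Real.sin θ| := by fun_prop
  have c2 : Continuous fun θ : ℝ => A + B*|Real.sin θ| + C*|Real.sin θ|^2 := by fun_prop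
  have c3 : Continuous fun θ : ℝ => A + B*|Real.sin θ| + C*|Real.sin θ|^2 + D*|Real.sin θ|^3 := by
    fun_prop
  rw [intervalIntegral.integral_add (c3.intervalIntegrable _ _)
    ((by fun_prop : Continuous fun θ : ℝ => E*|Real.sin θ|^4).intervalIntegrable _ _),
    intervalIntegral.integral_add (c2.intervalIntegrable _ _)
    ((by fun_prop : Continuous fun θ : ℝ => D*|Real.sin θ|^3).intervalIntegrable _ _),
    intervalIntegral.integral_add (c1.intervalIntegrable _ _)
    ((by fun_prop : Continuous fun θ : ℝ => C*|Real.sin θ|^2).intervalIntegrable _ _),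
    intervalIntegral.integral_add ((continuous_const : Continuous fun _ : ℝ => A).intervalIntegrable _ _)
    ((by fun_prop : Continuous fun θ : ℝ => B*|Real.sin θ|).intervalIntegrable _ _),
    intervalIntegral.integral_const,
    intervalIntegral.integral_const_mul, intervalIntegral.integral_const_mul,
    intervalIntegral.integral_const_mul, intervalIntegral.integral_const_mul,
    my_moment1, my_moment2, my_moment3, my_moment4]
  simp only [smul_eq_mul]
  ring

lemma my_kernel_int :
    ∫ θ in (0:ℝ)..(2*π), (3.6706 : ℝ) * (1 + (1.3*(|Real.sin θ|-1)) + (1.3*(|Real.sin θ|-1))^2/2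
      + (1.3*(|Real.sin θ|-1))^3/6 + (1.3*(|Real.sin θ|-1))^4/24) ≤ 4.96 * π := by
  have hcong : ∫ θ in (0:ℝ)..(2*π), (3.6706 : ℝ) * (1 + (1.3*(|Real.sin θ|-1))
      + (1.3*(|Real.sin θ|-1))^2/2 + (1.3*(|Real.sin θ|-1))^3/6 + (1.3*(|Real.sin θ|-1))^4/24)
      = ∫ θ in (0:ℝ)..(2*π), ((3.6706*(71481/240000) : ℝ) + (3.6706*(55796/240000))*|Real.sin θ|
        + (3.6706*(110526/240000))*|Real.sin θ|^2 + (3.6706*(-26364/240000))*|Real.sin θ|^3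
        + (3.6706*(28561/240000))*|Real.sin θ|^4) := by
    apply intervalIntegral.integral_congr
    intro θ _
    ring
  rw [hcong, my_poly_int]
  have hπ := Real.pi_gt_d6
  nlinarith

lemma my_halfplane {𝔉 : ℂ → ℂ} (hdiff : Differentiable ℂ 𝔉) {σ₁ σ₂ C M : ℝ}
    (hσ₁ : 0 ≤ σ₁) (h12 : σ₁ < σ₂) (hC : 0 < C)
    (hgrow : ∀ z, ‖𝔉 z‖ ≤ C * Real.exp (σ₁ * ‖z‖))
    (hreal : ∀ x : ℝ, ‖𝔉 x‖ ≤ M) :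
    ∀ z : ℂ, 0 ≤ z.im → ‖𝔉 z‖ ≤ M * Real.exp (σ₂ * z.im) := by
  intro z hz
  set H : ℂ → ℂ := fun w => Complex.exp (-(σ₂:ℂ) * w) * 𝔉 (Complex.I * w) with hH
  have hσ₂ : 0 < σ₂ := lt_of_le_of_lt hσ₁ h12
  have hHnorm : ∀ w : ℂ, ‖H w‖ = Real.exp (-(σ₂ * w.re)) * ‖𝔉 (Complex.I * w)‖ := by
    intro w
    rw [hH]
    simp only [norm_mul, Complex.norm_exp]
    congr 2
    simp [Complex.mul_re]
  have key : ∀ w : ℂ, 0 ≤ w.re → ‖H w‖ ≤ M := by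
    intro w hw
    apply PhragmenLindelof.right_half_plane_of_bounded_on_real
      (f := H) (C := M) _ _ _ _ hw
    · exact ((((differentiable_const _).mul differentiable_id).cexp).mul
        (hdiff.comp ((differentiable_const _).mul differentiable_id))).diffContOnCl
    · refine ⟨1, one_lt_two, σ₂ + σ₁, ?_⟩
      apply Asymptotics.IsBigO.of_bound C
      filter_upwards with w
      rw [hHnorm]
      have h1 : ‖𝔉 (Complex.I * w)‖ ≤ C * Real.exp (σ₁ * ‖w‖) := by
        have := hgrow (Complex.I * w)
        rwa [norm_mul, Complex.norm_I, one_mul] at this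
      have h2 : Real.exp (-(σ₂ * w.re)) ≤ Real.exp (σ₂ * ‖w‖) := by
        apply Real.exp_le_exp.2
        have := Complex.abs_re_le_norm w
        have := neg_abs_le w.re
        nlinarith [norm_nonneg w]
      have h3 : Real.exp (σ₂ * ‖w‖) * (C * Real.exp (σ₁ * ‖w‖))
          = C * Real.exp ((σ₂ + σ₁) * ‖w‖) := by
        rw [show Real.exp (σ₂ * ‖w‖) * (C * Real.exp (σ₁ * ‖w‖))
          = C * (Real.exp (σ₂ * ‖w‖) * Real.exp (σ₁ * ‖w‖)) from by ring,
          ← Real.exp_add]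
        ring_nf
      have h4 : (0:ℝ) ≤ Real.exp (-(σ₂ * w.re)) := (Real.exp_pos _).le
      calc Real.exp (-(σ₂ * w.re)) * ‖𝔉 (Complex.I * w)‖
          ≤ Real.exp (σ₂ * ‖w‖) * (C * Real.exp (σ₁ * ‖w‖)) := by
            apply mul_le_mul h2 h1 (norm_nonneg _) (Real.exp_pos _).le
        _ = C * Real.exp ((σ₂ + σ₁) * ‖w‖) := h3
        _ ≤ C * ‖Real.exp ((σ₂ + σ₁) * ‖w‖ ^ (1:ℝ))‖ := by
            rw [Real.rpow_one, Real.norm_eq_abs, abs_of_pos (Real.exp_pos _)]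
    · refine ⟨M ⊔ C, ?_⟩
      rw [Filter.eventually_map]
      filter_upwards [Filter.eventually_ge_atTop (0:ℝ)] with x hx
      rw [hHnorm]
      have h1 : ‖𝔉 (Complex.I * x)‖ ≤ C * Real.exp (σ₁ * x) := by
        have := hgrow (Complex.I * x)
        rwa [norm_mul, Complex.norm_I, one_mul, Complex.norm_real, Real.norm_eq_abs, abs_of_nonneg hx] at this
      have h2 : Real.exp (-(σ₂ * (x:ℂ).re)) * ‖𝔉 (Complex.I * x)‖
          ≤ Real.exp (-(σ₂ * x)) * (C * Real.exp (σ₁ * x)) := by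
        rw [Complex.ofReal_re]
        exact mul_le_mul le_rfl h1 (norm_nonneg _) (Real.exp_pos _).le
      refine le_sup_of_le_right (h2.trans ?_)
      rw [show Real.exp (-(σ₂ * x)) * (C * Real.exp (σ₁ * x))
          = C * (Real.exp (-(σ₂ * x)) * Real.exp (σ₁ * x)) from by ring, ← Real.exp_add,
          show -(σ₂ * x) + σ₁ * x = (σ₁ - σ₂) * x from by ring]
      nlinarith [Real.exp_le_one_iff.2 (by nlinarith : (σ₁ - σ₂) * x ≤ 0), hC.le]
    · intro x
      rw [hHnorm]
      have he : Complex.I * ((x:ℂ) * Complex.I) = ((-x : ℝ) : ℂ) := by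
        push_cast; ring_nf; rw [Complex.I_sq]; ring
      rw [he]
      have h2 : ((x:ℂ) * Complex.I).re = 0 := by simp
      rw [h2, mul_zero, neg_zero, Real.exp_zero, one_mul]
      exact hreal (-x)
  have hw := key (-Complex.I * z) (by simp [hz])
  rw [hHnorm] at hw
  have hIz : Complex.I * (-Complex.I * z) = z := by
    rw [show Complex.I * (-Complex.I * z) = -(Complex.I * Complex.I) * z by ring,
      Complex.I_mul_I]; ring
  rw [hIz] at hw
  have hre : (-Complex.I * z).re = z.im := by simp
  rw [hre] at hw
  have hcancel : Real.exp (-(σ₂ * z.im)) * Real.exp (σ₂ * z.im) = 1 := by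
    rw [← Real.exp_add]; simp
  have h5 := mul_le_mul_of_nonneg_right hw (Real.exp_pos (σ₂ * z.im)).le
  have h6 : Real.exp (-(σ₂ * z.im)) * ‖𝔉 z‖ * Real.exp (σ₂ * z.im) = ‖𝔉 z‖ := by
    calc Real.exp (-(σ₂ * z.im)) * ‖𝔉 z‖ * Real.exp (σ₂ * z.im)
        = ‖𝔉 z‖ * (Real.exp (-(σ₂ * z.im)) * Real.exp (σ₂ * z.im)) := by ring
      _ = ‖𝔉 z‖ := by rw [hcancel, mul_one]
  rw [h6] at h5
  exact h5

lemma my_globalbound {𝔉 : ℂ → ℂ} (hdiff : Differentiable ℂ 𝔉) {σ₁ σ₂ C M : ℝ}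
    (hσ₁ : 0 ≤ σ₁) (h12 : σ₁ < σ₂) (hC : 0 < C)
    (hgrow : ∀ z, ‖𝔉 z‖ ≤ C * Real.exp (σ₁ * ‖z‖))
    (hreal : ∀ x : ℝ, ‖𝔉 x‖ ≤ M) :
    ∀ z : ℂ, ‖𝔉 z‖ ≤ M * Real.exp (σ₂ * |z.im|) := by
  intro z
  rcases le_or_gt 0 z.im with h | h
  · rw [abs_of_nonneg h]
    exact my_halfplane hdiff hσ₁ h12 hC hgrow hreal z h
  · have hrefl := my_halfplane (𝔉 := fun w => 𝔉 (-w)) (hdiff.comp differentiable_neg)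
      hσ₁ h12 hC (fun w => by simpa using hgrow (-w))
      (fun x => by
        have := hreal (-x)
        push_cast at this ⊢
        simpa using this)
      (-z) (by simp; linarith)
    simp only [neg_neg] at hrefl
    rw [abs_of_neg h]
    simpa using hrefl

lemma my_deriv_bound {𝔉 : ℂ → ℂ} (hdiff : Differentiable ℂ 𝔉) {σ₂ M : ℝ}
    (hσ₂ : 0 < σ₂) (hM : 0 ≤ M)
    (hbig : ∀ z : ℂ, ‖𝔉 z‖ ≤ M * Real.exp (σ₂ * |z.im|)) (x : ℝ) :
    ‖deriv 𝔉 (x:ℂ)‖ ≤ 1.91 * σ₂ * M := by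
  set r : ℝ := 1.3 / σ₂ with hrdef
  have hr : 0 < r := by positivity
  have hRpos : 0 < r.toNNReal := Real.toNNReal_pos.2 hr
  have hps := hdiff.hasFPowerSeriesOnBall (x : ℂ) hRpos
  rw [Real.coe_toNNReal r hr.le] at hps
  have hder : deriv 𝔉 (x:ℂ) = (cauchyPowerSeries 𝔉 x r 1) fun _ => 1 :=
    hps.hasFPowerSeriesAt.deriv
  have h1 : ‖deriv 𝔉 (x:ℂ)‖ ≤ ‖cauchyPowerSeries 𝔉 x r 1‖ := by
    rw [hder]
    have := (cauchyPowerSeries 𝔉 x r 1).le_opNorm fun _ => (1:ℂ)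
    simpa using this
  have h2 := norm_cauchyPowerSeries_le 𝔉 x r 1
  -- bound the integral
  have hker : ∀ θ : ℝ, ‖𝔉 (circleMap x r θ)‖
      ≤ (3.6706 * M) * (1 + (1.3*(|Real.sin θ|-1)) + (1.3*(|Real.sin θ|-1))^2/2
        + (1.3*(|Real.sin θ|-1))^3/6 + (1.3*(|Real.sin θ|-1))^4/24) := by
    intro θ
    have him : |(circleMap x r θ).im| = r * |Real.sin θ| := by
      simp [circleMap, abs_mul, abs_of_pos hr]
    have hb := hbig (circleMap x r θ)
    rw [him] at hb
    have hexp : σ₂ * (r * |Real.sin θ|) = 1.3 * |Real.sin θ| := by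
      rw [hrdef]; field_simp
    rw [hexp] at hb
    have habs : |Real.sin θ| ≤ 1 := by
      rw [abs_le]; exact ⟨Real.neg_one_le_sin θ, Real.sin_le_one θ⟩
    have hpw := my_pointwise |Real.sin θ| habs
    calc ‖𝔉 (circleMap x r θ)‖ ≤ M * Real.exp (1.3 * |Real.sin θ|) := hb
      _ ≤ M * (3.6706 * (1 + (1.3*(|Real.sin θ|-1)) + (1.3*(|Real.sin θ|-1))^2/2
          + (1.3*(|Real.sin θ|-1))^3/6 + (1.3*(|Real.sin θ|-1))^4/24)) :=
        mul_le_mul_of_nonneg_left hpw hM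
      _ = (3.6706 * M) * (1 + (1.3*(|Real.sin θ|-1)) + (1.3*(|Real.sin θ|-1))^2/2
          + (1.3*(|Real.sin θ|-1))^3/6 + (1.3*(|Real.sin θ|-1))^4/24) := by ring
  have hint1 : ∫ θ in (0:ℝ)..(2*π), ‖𝔉 (circleMap x r θ)‖
      ≤ ∫ θ in (0:ℝ)..(2*π), (3.6706 * M) * (1 + (1.3*(|Real.sin θ|-1))
        + (1.3*(|Real.sin θ|-1))^2/2 + (1.3*(|Real.sin θ|-1))^3/6
        + (1.3*(|Real.sin θ|-1))^4/24) := by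
    apply intervalIntegral.integral_mono_on Real.two_pi_pos.le
    · exact ((hdiff.continuous.comp (continuous_circleMap x r)).norm).intervalIntegrable _ _
    · apply Continuous.intervalIntegrable; fun_prop
    · intro θ _; exact hker θ
  have hint2 : ∫ θ in (0:ℝ)..(2*π), (3.6706 * M) * (1 + (1.3*(|Real.sin θ|-1))
        + (1.3*(|Real.sin θ|-1))^2/2 + (1.3*(|Real.sin θ|-1))^3/6
        + (1.3*(|Real.sin θ|-1))^4/24) ≤ M * (4.96 * π) := by
    have hM' : ∀ θ : ℝ, (3.6706 * M) * (1 + (1.3*(|Real.sin θ|-1))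
        + (1.3*(|Real.sin θ|-1))^2/2 + (1.3*(|Real.sin θ|-1))^3/6
        + (1.3*(|Real.sin θ|-1))^4/24)
        = M * ((3.6706:ℝ) * (1 + (1.3*(|Real.sin θ|-1))
        + (1.3*(|Real.sin θ|-1))^2/2 + (1.3*(|Real.sin θ|-1))^3/6
        + (1.3*(|Real.sin θ|-1))^4/24)) := fun θ => by ring
    rw [intervalIntegral.integral_congr (fun θ _ => hM' θ),
      intervalIntegral.integral_const_mul]
    exact mul_le_mul_of_nonneg_left my_kernel_int hM
  -- assemble
  have hnn : (0:ℝ) ≤ (2*π)⁻¹ := by positivity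
  have h3 : ‖cauchyPowerSeries 𝔉 x r 1‖ ≤ ((2*π)⁻¹ * (M * (4.96 * π))) * |r|⁻¹ ^ 1 := by
    refine h2.trans ?_
    apply mul_le_mul_of_nonneg_right _ (by positivity)
    exact mul_le_mul_of_nonneg_left (hint1.trans hint2) hnn
  have hπ := Real.pi_pos
  have hrabs : |r| = r := abs_of_pos hr
  rw [hrabs, pow_one] at h3
  have hval : ((2*π)⁻¹ * (M * (4.96 * π))) * r⁻¹ = (4.96/2.6) * σ₂ * M := by
    rw [hrdef]; field_simp; ring
  rw [hval] at h3
  refine (h1.trans h3).trans ?_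
  have : (4.96/2.6 : ℝ) ≤ 1.91 := by norm_num
  nlinarith

lemma my_aux {K a τ p x₀ : ℝ} (hK : 0 < K) (ha : 0 < a) (hp : 1 ≤ p)
    (G : ℝ → ℝ) (hG : Continuous G) (hGnn : ∀ y, 0 ≤ G y)
    (hlip : ∀ y, x₀ ≤ y → a - K*(y - x₀) ≤ G y)
    (hlo : -τ ≤ x₀) (hhi : x₀ + a/K ≤ τ) :
    a^(p+1)/((p+1)*K) ≤ ∫ y in (-τ)..τ, G y ^ p := by
  have hp0 : (0:ℝ) < p := by linarith
  have hδ : 0 < a/K := by positivity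
  have hcont_rpow : Continuous fun t : ℝ => t ^ p :=
    continuous_iff_continuousAt.2 fun t => Real.continuousAt_rpow_const t p (Or.inr hp0.le)
  have hcontGp : Continuous fun y => G y ^ p := hcont_rpow.comp hG
  have hcontLp : Continuous fun y : ℝ => (a - K*(y - x₀)) ^ p := by
    apply hcont_rpow.comp; fun_prop
  -- Step 1: exact integral of the linear profile
  have hFTC : ∫ y in x₀..(x₀ + a/K), (a - K*(y - x₀)) ^ p = a^(p+1)/((p+1)*K) := by
    have hderiv : ∀ y ∈ Set.uIcc x₀ (x₀ + a/K),
        HasDerivAt (fun y : ℝ => -(a - K*(y - x₀))^(p+1) / ((p+1)*K))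
          ((a - K*(y - x₀)) ^ p) y := by
      intro y _
      have hinner : HasDerivAt (fun y : ℝ => a - K*(y - x₀)) (-K) y := by
        simpa using (((hasDerivAt_id y).sub_const x₀).const_mul K).const_sub a
      have houter : HasDerivAt (fun u : ℝ => u ^ (p+1))
          ((p+1) * (a - K*(y - x₀)) ^ (p+1-1)) (a - K*(y - x₀)) :=
        Real.hasDerivAt_rpow_const (Or.inr (by linarith))
      have hcomp := (houter.comp y hinner).neg.div_const ((p+1)*K)
      have : -((p+1) * (a - K*(y - x₀)) ^ (p+1-1) * -K) / ((p+1)*K)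
          = (a - K*(y - x₀)) ^ p := by
        rw [add_sub_cancel_right]
        field_simp
      rw [this] at hcomp
      exact hcomp
    rw [intervalIntegral.integral_eq_sub_of_hasDerivAt hderiv
      (hcontLp.intervalIntegrable _ _)]
    have e1 : a - K*((x₀ + a/K) - x₀) = 0 := by field_simp; ring
    have e2 : a - K*(x₀ - x₀) = a := by ring_nf
    rw [e1, e2, Real.zero_rpow (by linarith : p+1 ≠ 0)]
    ring
  -- Step 2: compare with G^p on the subinterval
  have hmono : ∫ y in x₀..(x₀ + a/K), (a - K*(y - x₀)) ^ p
      ≤ ∫ y in x₀..(x₀ + a/K), G y ^ p := by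
    apply intervalIntegral.integral_mono_on (by linarith)
      (hcontLp.intervalIntegrable _ _) (hcontGp.intervalIntegrable _ _)
    intro y hy
    have h1 : 0 ≤ a - K*(y - x₀) := by
      have := hy.2
      have h2 : K*(y - x₀) ≤ K*(a/K) := by
        apply mul_le_mul_of_nonneg_left _ hK.le
        linarith
      rw [mul_div_cancel₀ a hK.ne'] at h2
      linarith
    exact Real.rpow_le_rpow h1 (hlip y hy.1) hp0.le
  -- Step 3: extend to the full interval
  have hsub : ∫ y in x₀..(x₀ + a/K), G y ^ p ≤ ∫ y in (-τ)..τ, G y ^ p := by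
    apply intervalIntegral.integral_mono_interval hlo (by linarith) hhi
    · filter_upwards with y
      exact Real.rpow_nonneg (hGnn y) p
    · exact hcontGp.intervalIntegrable _ _
  rw [← hFTC]
  exact hmono.trans hsub


/-- If `F ∈ B^∞_σ` is bounded and continuous with `‖F‖_∞ ≤ M`, `τ ≥ π/σ`,
`|F(x₀)| ≥ a` for some `x₀ ∈ [−τ, τ]` and `0 < a ≤ M`, then
`∫_{−τ}^{τ} |F|^p ≥ a^{p+1}/(2^{p+1} σ M)`. -/
theorem integral_rpow_lower_bound (σ : ℝ) (hσ : 0 < σ) (p : ℝ) (hp : 1 ≤ p)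
    (F : ℝ → ℂ) (hFcont : Continuous F) (hF : MemBernstein σ ⊤ F)
    (M : ℝ) (hM : 0 < M) (hFM : ∀ x : ℝ, ‖F x‖ ≤ M)
    (τ : ℝ) (hτ : π / σ ≤ τ) (x₀ : ℝ) (hx₀ : x₀ ∈ Set.Icc (-τ) τ)
    (a : ℝ) (ha : 0 < a) (haM : a ≤ M) (hFx₀ : a ≤ ‖F x₀‖) :
    a ^ (p + 1) / (2 ^ (p + 1) * σ * M) ≤ ∫ y in (-τ)..τ, ‖F y‖ ^ p := by
  obtain ⟨-, 𝔉, hdiff, htype, hagree⟩ := hF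
  have hFMc : ∀ x : ℝ, ‖𝔉 x‖ ≤ M := fun x => by rw [hagree x]; exact hFM x
  obtain ⟨C₀, hC₀, hgrow⟩ := htype (σ/100) (by positivity)
  have hglob := my_globalbound hdiff (by positivity : (0:ℝ) ≤ σ + σ/100)
    (by linarith : σ + σ/100 < σ + σ/50) hC₀ hgrow hFMc
  set K : ℝ := 1.95*σ*M with hKdef
  have hK : 0 < K := by rw [hKdef]; positivity
  have hderb : ∀ x : ℝ, ‖deriv 𝔉 x‖ ≤ K := by
    intro x
    have h1 := my_deriv_bound hdiff (by positivity : (0:ℝ) < σ + σ/50) hM.le hglob x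
    calc ‖deriv 𝔉 (x:ℂ)‖ ≤ 1.91 * (σ + σ/50) * M := h1
      _ ≤ K := by rw [hKdef]; nlinarith
  have hlip : ∀ x y : ℝ, ‖𝔉 y - 𝔉 x‖ ≤ K * |y - x| := by
    intro x y
    have := Convex.norm_image_sub_le_of_norm_hasDerivWithin_le
      (f := fun t : ℝ => 𝔉 t) (f' := fun t : ℝ => deriv 𝔉 t) (s := Set.univ) (C := K)
      (fun t _ => ((hdiff (t:ℂ)).hasDerivAt.comp_ofReal).hasDerivWithinAt)
      (fun t _ => hderb t) convex_univ (Set.mem_univ x) (Set.mem_univ y)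
    simpa [Real.norm_eq_abs] using this
  have master : ∀ y : ℝ, a - K * |y - x₀| ≤ ‖F y‖ := by
    intro y
    have h1 := norm_sub_norm_le (𝔉 x₀) (𝔉 y)
    have h2 := hlip y x₀
    rw [hagree x₀, hagree y] at h1 h2
    rw [abs_sub_comm] at h2
    have h3 : a ≤ ‖F x₀‖ := hFx₀
    linarith
  have hπσ : π ≤ τ * σ := by rwa [div_le_iff₀ hσ] at hτ
  have hδτ : a / K ≤ τ := by
    rw [div_le_iff₀ hK, hKdef]
    nlinarith [Real.pi_gt_three]
  have key : a^(p+1)/((p+1)*K) ≤ ∫ y in (-τ)..τ, ‖F y‖ ^ p := by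
    rcases le_or_gt x₀ 0 with hx | hx
    · apply my_aux (τ := τ) hK ha hp (fun y => ‖F y‖) hFcont.norm (fun y => norm_nonneg _)
        ?_ hx₀.1 (by linarith)
      intro y hy
      have h1 := master y
      rw [abs_of_nonneg (by linarith : 0 ≤ y - x₀)] at h1
      exact h1
    · have hres := my_aux (τ := τ) (x₀ := -x₀) hK ha hp (fun y => ‖F (-y)‖)
        (hFcont.comp continuous_neg).norm (fun y => norm_nonneg _)
        ?_ (by linarith [hx₀.2]) (by linarith)
      · have hcn := intervalIntegral.integral_comp_neg (a := -τ) (b := τ)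
          (fun y => ‖F y‖ ^ p)
        simp only [neg_neg] at hcn
        calc a^(p+1)/((p+1)*K) ≤ ∫ y in (-τ)..τ, ‖F (-y)‖ ^ p := hres
          _ = ∫ y in (-τ)..τ, ‖F y‖ ^ p := by rw [hcn]
      · intro y hy
        have h1 := master (-y)
        have h2 : |-y - x₀| = y + x₀ := by
          rw [show -y - x₀ = -(y + x₀) by ring, abs_neg,
            abs_of_nonneg (by linarith : 0 ≤ y + x₀)]
        rw [h2] at h1
        calc a - K * (y - -x₀) = a - K * (y + x₀) := by ring
          _ ≤ ‖F (-y)‖ := h1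
  refine le_trans ?_ key
  have h2p : (1:ℝ) + p ≤ 2^p := by
    have h := one_add_mul_self_le_rpow_one_add (s := (1:ℝ)) (by norm_num) hp
    rw [mul_one] at h
    norm_num at h
    exact h
  have hrp : (2:ℝ)^(p+1) = 2^p * 2 := by
    rw [Real.rpow_add two_pos, Real.rpow_one]
  have hden : (p+1)*K ≤ 2^(p+1)*σ*M := by
    rw [hrp, hKdef]
    nlinarith [hσ.le, hM.le, mul_pos hσ hM]
  have hnum : 0 < a^(p+1) := Real.rpow_pos_of_pos ha _
  apply div_le_div_of_nonneg_left hnum.le _ hden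
  positivity
end
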